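/- arXiv:1806.03233 — 9 statements merged into one kernel-verified Lean document; each statement's English description precedes it below -/
import Mathlib

section
/- Let F be a nilpotent endomorphism of V with Jordan type the partition p_1^{r_1}⋯p_s^{r_s}, let F^t be its 'transpose' (the shift to the right in a Jordan basis, so that F F^t and F^t F are idempotents with FF^t = 1 - 1_{ker F^t} and F^t F = 1 - 1_{ker F}). For ℓ ∈ ℤ_{≥0} define φ_ℓ : End(V) → End(V) by φ_ℓ(A) = ∑_{i=0}^{ℓ} F^i (F^t)^ℓ A (F^t)^ℓ F^{ℓ−i}. Then for every A ∈ Hom(V_+, V_−) (where V_+ = ker F^t and V_− = ker F, viewed as the subspace 1_{V_−}·End(V)·1_{V_+} of End(V)), the endomorphism φ_ℓ(A) commutes with F. -/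
/-!
Write `B = (Fᵗ)^ℓ A (Fᵗ)^ℓ`, so that `φ_ℓ(A) = ∑_{i ≤ ℓ} F^i B F^{ℓ-i}`. Then `F φ_ℓ(A) - φ_ℓ(A) F`
telescopes to `F^{ℓ+1} B - B F^{ℓ+1}`, and both terms vanish: `A` takes values in the leftmost
boxes, which `(Fᵗ)^ℓ` moves only `ℓ` steps to the right, so `F^{ℓ+1}` pushes them off the row;
dually, `F^{ℓ+1}` followed by `(Fᵗ)^ℓ` never lands in a rightmost box, where `A` is supported.
-/

/-- A "box" of the pyramid attached to the partition `p₁^{r₁} ⋯ p_s^{r_s}`. The last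
coordinate is the position of the box in its row, counted from the right
(`0` = rightmost box). -/
abbrev PyramidBox {s : ℕ} (p r : Fin s → ℕ) : Type := (i : Fin s) × (Fin (r i) × Fin (p i))

open Finset

theorem commute_sum_pow_mul_mul_pow_of_pow_succ_mul_eq_zero {R : Type*} [Semiring R]
    (X B : R) (n : ℕ) (hXB : X ^ (n + 1) * B = 0) (hBX : B * X ^ (n + 1) = 0) :
    Commute X (∑ i ∈ range (n + 1), X ^ i * B * X ^ (n - i)) := by
  set g : ℕ → R := fun i => X ^ i * B * X ^ (n + 1 - i)
  have hleft : X * ∑ i ∈ range (n + 1), X ^ i * B * X ^ (n - i) =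
      ∑ i ∈ range (n + 1), g (i + 1) := by
    rw [mul_sum]
    refine sum_congr rfl fun i _ => ?_
    rw [show g (i + 1) = X ^ (i + 1) * B * X ^ (n - i) by simp only [g]; congr 2; omega,
      pow_succ']
    simp only [mul_assoc]
  have hright : (∑ i ∈ range (n + 1), X ^ i * B * X ^ (n - i)) * X =
      ∑ i ∈ range (n + 1), g i := by
    rw [sum_mul]
    refine sum_congr rfl fun i hi => ?_
    rw [show g i = X ^ i * B * X ^ (n - i + 1) by
      simp only [g]; congr 2; have := mem_range.1 hi; omega, pow_succ, mul_assoc]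
  -- both sums equal `∑ i ∈ range (n + 2), g i`, since the end terms `g 0` and `g (n + 1)` vanish
  have htelescope := (sum_range_succ' g (n + 1)).symm.trans (sum_range_succ g (n + 1))
  simp only [g, pow_zero, one_mul, Nat.sub_zero, Nat.sub_self, mul_one, hXB, hBX,
    add_zero] at htelescope
  rw [commute_iff_eq, hleft, hright]
  exact htelescope

section PyramidShift

variable {K V : Type*} [Semiring K] [AddCommMonoid V] [Module K V] {s : ℕ} {p r : Fin s → ℕ}
  (b : Module.Basis (PyramidBox p r) K V)

def IsLeftShift (F : Module.End K V) : Prop :=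
  ∀ x : PyramidBox p r, F (b x) = if h : (x.2.2 : ℕ) + 1 < p x.1
    then b ⟨x.1, x.2.1, ⟨(x.2.2 : ℕ) + 1, h⟩⟩ else 0

def IsRightShift (Ft : Module.End K V) : Prop :=
  ∀ x : PyramidBox p r, Ft (b x) = if 0 < (x.2.2 : ℕ)
    then b ⟨x.1, x.2.1, ⟨(x.2.2 : ℕ) - 1, Nat.lt_of_le_of_lt (Nat.sub_le _ _) x.2.2.isLt⟩⟩
    else 0

variable {b}

theorem IsLeftShift.pow_apply {F : Module.End K V} (hF : IsLeftShift b F) (k : ℕ) (x : PyramidBox p r) :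
    (F ^ k) (b x) = if h : (x.2.2 : ℕ) + k < p x.1
      then b ⟨x.1, x.2.1, ⟨(x.2.2 : ℕ) + k, h⟩⟩ else 0 := by
  obtain ⟨i, j, m⟩ := x
  induction k with
  | zero => simp
  | succ k ih =>
    rw [pow_succ', Module.End.mul_apply, ih]
    dsimp only
    by_cases hk : (m : ℕ) + k < p i
    · rw [dif_pos hk, hF]
      simp only [← add_assoc]
    · rw [dif_neg hk, map_zero, dif_neg (by omega)]

theorem IsRightShift.pow_apply {Ft : Module.End K V} (hFt : IsRightShift b Ft) (k : ℕ) (x : PyramidBox p r) :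
    (Ft ^ k) (b x) = if k ≤ (x.2.2 : ℕ)
      then b ⟨x.1, x.2.1, ⟨(x.2.2 : ℕ) - k, Nat.lt_of_le_of_lt (Nat.sub_le _ _) x.2.2.isLt⟩⟩
      else 0 := by
  obtain ⟨i, j, m⟩ := x
  induction k with
  | zero => simp
  | succ k ih =>
    rw [pow_succ', Module.End.mul_apply, ih]
    dsimp only
    by_cases hk : k ≤ (m : ℕ)
    · rw [if_pos hk, hFt]
      dsimp only
      by_cases hk' : k < (m : ℕ)
      · rw [if_pos (by omega), if_pos (Nat.succ_le_of_lt hk')]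
        simp only [Nat.sub_sub]
      · rw [if_neg (by omega), if_neg (by omega)]
    · rw [if_neg hk, map_zero, if_neg (by omega)]

theorem IsLeftShift.pow_succ_mul_pow_mul_eq_zero_of_proj_leftmost {F Ft Pminus : Module.End K V}
    (hF : IsLeftShift b F) (hFt : IsRightShift b Ft)
    (hPminus : ∀ x : PyramidBox p r, Pminus (b x) = if (x.2.2 : ℕ) + 1 = p x.1 then b x else 0)
    (ℓ : ℕ) : F ^ (ℓ + 1) * Ft ^ ℓ * Pminus = 0 := by
  refine b.ext fun ⟨i, j, m⟩ => ?_
  rw [Module.End.mul_apply, Module.End.mul_apply, hPminus]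
  dsimp only
  split_ifs with hm
  · rw [hFt.pow_apply]
    dsimp only
    split_ifs
    · rw [hF.pow_apply, dif_neg (by dsimp only; omega), LinearMap.zero_apply]
    · rw [map_zero, LinearMap.zero_apply]
  · rw [map_zero, map_zero, LinearMap.zero_apply]

theorem IsLeftShift.mul_pow_mul_pow_succ_eq_zero_of_proj_rightmost {F Ft Pplus : Module.End K V}
    (hF : IsLeftShift b F) (hFt : IsRightShift b Ft)
    (hPplus : ∀ x : PyramidBox p r, Pplus (b x) = if (x.2.2 : ℕ) = 0 then b x else 0)
    (ℓ : ℕ) : Pplus * Ft ^ ℓ * F ^ (ℓ + 1) = 0 := by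
  refine b.ext fun ⟨i, j, m⟩ => ?_
  rw [Module.End.mul_apply, Module.End.mul_apply, hF.pow_apply]
  dsimp only
  split_ifs with hm
  · rw [hFt.pow_apply, if_pos (by dsimp only; omega), hPplus,
      if_neg (by dsimp only; omega), LinearMap.zero_apply]
  · rw [map_zero, map_zero, LinearMap.zero_apply]

end PyramidShift

theorem stmt3_general {K : Type*} [Field K]
    {V : Type*} [AddCommGroup V] [Module K V]
    {s : ℕ} (p r : Fin s → ℕ)
    (b : Module.Basis (PyramidBox p r) K V)
    (F Ft Pplus Pminus : Module.End K V)
    (hF : ∀ x : PyramidBox p r,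
      F (b x) = if h : (x.2.2 : ℕ) + 1 < p x.1
        then b ⟨x.1, x.2.1, ⟨(x.2.2 : ℕ) + 1, h⟩⟩ else 0)
    (hFt : ∀ x : PyramidBox p r,
      Ft (b x) = if 0 < (x.2.2 : ℕ)
        then b ⟨x.1, x.2.1, ⟨(x.2.2 : ℕ) - 1, Nat.lt_of_le_of_lt (Nat.sub_le _ _) x.2.2.isLt⟩⟩
        else 0)
    (hPplus : ∀ x : PyramidBox p r, Pplus (b x) = if (x.2.2 : ℕ) = 0 then b x else 0)
    (hPminus : ∀ x : PyramidBox p r, Pminus (b x) = if (x.2.2 : ℕ) + 1 = p x.1 then b x else 0)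
    (ℓ : ℕ) (A : Module.End K V) (hA : Pminus * A * Pplus = A) :
    Commute F (∑ i ∈ Finset.range (ℓ + 1), F ^ i * Ft ^ ℓ * A * Ft ^ ℓ * F ^ (ℓ - i)) := by
  have hleft : F ^ (ℓ + 1) * (Ft ^ ℓ * A * Ft ^ ℓ) = 0 := by
    rw [← hA]
    calc F ^ (ℓ + 1) * (Ft ^ ℓ * (Pminus * A * Pplus) * Ft ^ ℓ)
        = F ^ (ℓ + 1) * Ft ^ ℓ * Pminus * (A * Pplus * Ft ^ ℓ) := by simp only [mul_assoc]
      _ = 0 := by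
        rw [IsLeftShift.pow_succ_mul_pow_mul_eq_zero_of_proj_leftmost hF hFt hPminus, zero_mul]
  have hright : Ft ^ ℓ * A * Ft ^ ℓ * F ^ (ℓ + 1) = 0 := by
    rw [← hA]
    calc Ft ^ ℓ * (Pminus * A * Pplus) * Ft ^ ℓ * F ^ (ℓ + 1)
        = Ft ^ ℓ * Pminus * A * (Pplus * Ft ^ ℓ * F ^ (ℓ + 1)) := by simp only [mul_assoc]
      _ = 0 := by
        rw [IsLeftShift.mul_pow_mul_pow_succ_eq_zero_of_proj_rightmost hF hFt hPplus, mul_zero]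
  simpa only [mul_assoc] using
    commute_sum_pow_mul_mul_pow_of_pow_succ_mul_eq_zero F _ ℓ hleft hright

/-- Let `F` be the nilpotent "left shift" of a pyramid and `Ft = Fᵗ` the
"right shift", with `V₊ = ker Fᵗ` (rightmost boxes, projection `Pplus`) and
`V₋ = ker F` (leftmost boxes, projection `Pminus`), so that `F * Ft = 1 - Pplus` and
`Ft * F = 1 - Pminus`.  For `φ_ℓ(A) = ∑_{i=0}^{ℓ} F^i (Fᵗ)^ℓ A (Fᵗ)^ℓ F^{ℓ-i}`, if
`A ∈ Hom(V₊, V₋)`, i.e. `A = 1_{V₋} A 1_{V₊}`, then `φ_ℓ(A)` commutes with `F`. -/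
theorem stmt3 {K : Type*} [Field K] [CharZero K]
    {V : Type*} [AddCommGroup V] [Module K V]
    {s : ℕ} (p r : Fin s → ℕ)
    (b : Module.Basis (PyramidBox p r) K V)
    (F Ft Pplus Pminus : Module.End K V)
    (hF : ∀ x : PyramidBox p r,
      F (b x) = if h : (x.2.2 : ℕ) + 1 < p x.1
        then b ⟨x.1, x.2.1, ⟨(x.2.2 : ℕ) + 1, h⟩⟩ else 0)
    (hFt : ∀ x : PyramidBox p r,
      Ft (b x) = if 0 < (x.2.2 : ℕ)
        then b ⟨x.1, x.2.1, ⟨(x.2.2 : ℕ) - 1, Nat.lt_of_le_of_lt (Nat.sub_le _ _) x.2.2.isLt⟩⟩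
        else 0)
    (hPplus : ∀ x : PyramidBox p r, Pplus (b x) = if (x.2.2 : ℕ) = 0 then b x else 0)
    (hPminus : ∀ x : PyramidBox p r, Pminus (b x) = if (x.2.2 : ℕ) + 1 = p x.1 then b x else 0)
    (ℓ : ℕ) (A : Module.End K V) (hA : Pminus * A * Pplus = A) :
    Commute F (∑ i ∈ Finset.range (ℓ + 1), F ^ i * Ft ^ ℓ * A * Ft ^ ℓ * F ^ (ℓ - i)) :=
  stmt3_general p r b F Ft Pplus Pminus hF hFt hPplus hPminus ℓ A hA
end

section
/- With the same notation, the centralizer g^f of F in gl(V) decomposes as the direct sum g^f = ⊕_{h,k=0}^{p_1−1} ⊕_{ℓ=0}^{min(h,k)} φ_ℓ(g_0^f(h,k)). -/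
/-- The linear map `φ_ℓ : End V → End V`, `φ_ℓ(A) = ∑_{i=0}^{ℓ} F^i (Fᵗ)^ℓ A (Fᵗ)^ℓ F^{ℓ-i}`. -/
noncomputable def phiMap {K : Type*} [Field K] {V : Type*} [AddCommGroup V] [Module K V]
    (F Ft : Module.End K V) (ℓ : ℕ) : Module.End K V →ₗ[K] Module.End K V :=
  ∑ i ∈ Finset.range (ℓ + 1),
    (LinearMap.mulLeft K (F ^ i * Ft ^ ℓ)).comp (LinearMap.mulRight K (Ft ^ ℓ * F ^ (ℓ - i)))

/-- The subspace `g₀^f(h,k) = Hom(V₊ ∩ (Fᵗ)^h V₋, V₋ ∩ F^k V₊)` of `End V`, realized as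
`{A | Qm * A * Qp = A}` where `Qm`, `Qp` are the projections onto the two subspaces. -/
noncomputable def gfZeroPiece {K : Type*} [Field K] {V : Type*} [AddCommGroup V] [Module K V]
    (Qm Qp : Module.End K V) : Submodule K (Module.End K V) :=
  LinearMap.ker ((LinearMap.mulLeft K Qm).comp (LinearMap.mulRight K Qp) - LinearMap.id)

/-!
In the Jordan basis of `F`, an endomorphism commuting with `F` is determined by its values on
the bottoms of the chains, i.e. on the images of the `Qplus h`. For `A ∈ g₀^f(h,k)` and
`ℓ ≤ min(h,k)`, `φ_ℓ(A)` commutes with `F` and sends the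
bottoms of the chains of length `h + 1` to `(Fᵗ)^ℓ A` of them and the other bottoms to `0`.
Consequently `B ↦ φ_ℓ(Q₋(k) F^ℓ B Q₊(h))` is a projection onto the `(h,k,ℓ)` piece that
kills the other pieces; this gives independence. The resolution of the identity
`∑_k ∑_{ℓ ≤ k} (Fᵗ)^ℓ Q₋(k) F^ℓ = 1` shows that these projections of `B ∈ g^f` add up
to `B`.
-/

open Finset Module

-- `a S - S a` telescopes to `a ^ (n + 1) x - x a ^ (n + 1)`.
theorem commute_sum_pow_mul_mul_pow_sub {R : Type*} [Ring R] {a x : R} {n : ℕ}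
    (h₁ : a ^ (n + 1) * x = 0) (h₂ : x * a ^ (n + 1) = 0) :
    Commute a (∑ i ∈ range (n + 1), a ^ i * x * a ^ (n - i)) := by
  set f : ℕ → R := fun i => a ^ i * x * a ^ (n + 1 - i)
  rw [Commute, SemiconjBy, ← sub_eq_zero, mul_sum, sum_mul, ← sum_sub_distrib]
  calc ∑ i ∈ range (n + 1), (a * (a ^ i * x * a ^ (n - i)) - a ^ i * x * a ^ (n - i) * a)
      = ∑ i ∈ range (n + 1), (f (i + 1) - f i) := by
        refine sum_congr rfl fun i hi => ?_
        rw [mem_range] at hi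
        simp only [f, show n + 1 - (i + 1) = n - i by omega, show n + 1 - i = n - i + 1 by omega,
          pow_succ' a i, pow_succ a (n - i), mul_assoc]
    _ = 0 := by rw [sum_range_sub]; simp [f, h₁, h₂]

theorem iSupIndep_of_proj {R M ι : Type*} [Semiring R] [AddCommMonoid M] [Module R M]
    {S : ι → Submodule R M} (π : ι → M →ₗ[R] M)
    (hself : ∀ i, ∀ x ∈ S i, π i x = x)
    (hother : ∀ i j, i ≠ j → ∀ x ∈ S j, π i x = 0) : iSupIndep S := by
  intro i
  rw [Submodule.disjoint_def]
  intro x hxi hx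
  have hker : ⨆ (j) (_ : j ≠ i), S j ≤ LinearMap.ker (π i) :=
    iSup₂_le fun j hj y hy => hother i j (Ne.symm hj) y hy
  rw [← hself i x hxi]
  exact hker hx

section Endomorphisms

variable {K : Type*} [Field K] {V : Type*} [AddCommGroup V] [Module K V]

section gfZeroPiece

variable {Qm Qp A : Module.End K V}

theorem mem_gfZeroPiece : A ∈ gfZeroPiece Qm Qp ↔ Qm * A * Qp = A := by
  simp [gfZeroPiece, sub_eq_zero, mul_assoc]

theorem mul_mem_gfZeroPiece (hQm : IsIdempotentElem Qm) (hQp : IsIdempotentElem Qp)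
    (X : Module.End K V) : Qm * X * Qp ∈ gfZeroPiece Qm Qp := by
  rw [mem_gfZeroPiece, ← mul_assoc, ← mul_assoc, hQm.eq, mul_assoc _ Qp Qp, hQp.eq]

theorem mul_eq_of_mem_gfZeroPiece_left (hQm : IsIdempotentElem Qm)
    (hA : A ∈ gfZeroPiece Qm Qp) : Qm * A = A := by
  rw [← mem_gfZeroPiece.1 hA, ← mul_assoc, ← mul_assoc, hQm.eq]

theorem mul_eq_of_mem_gfZeroPiece_right (hQp : IsIdempotentElem Qp)
    (hA : A ∈ gfZeroPiece Qm Qp) : A * Qp = A := by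
  rw [← mem_gfZeroPiece.1 hA, mul_assoc, hQp.eq]

end gfZeroPiece

theorem phiMap_apply (F Ft A : Module.End K V) (ℓ : ℕ) : phiMap F Ft ℓ A =
    ∑ i ∈ range (ℓ + 1), F ^ i * (Ft ^ ℓ * A * Ft ^ ℓ) * F ^ (ℓ - i) := by
  simp [phiMap, mul_assoc]

/-- `φ_ℓ(g₀^f(h,k))`, indexed by `t = (h, k, ℓ)`. -/
noncomputable def gfPiece (F Ft : Module.End K V) (Qplus Qminus : ℕ → Module.End K V)
    (t : ℕ × ℕ × ℕ) : Submodule K (Module.End K V) :=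
  (gfZeroPiece (Qminus t.2.1) (Qplus t.1)).map (phiMap F Ft t.2.2)

abbrev GfIndex (N : ℕ) : Type :=
  {t : ℕ × ℕ × ℕ // t.1 < N ∧ t.2.1 < N ∧ t.2.2 ≤ min t.1 t.2.1}

theorem mem_ker_mulLeft_sub_mulRight {F B : Module.End K V} :
    B ∈ LinearMap.ker (LinearMap.mulLeft K F - LinearMap.mulRight K F) ↔ Commute F B := by
  simp [sub_eq_zero, Commute, SemiconjBy]

section Pyramid

variable {s : ℕ} {p r : Fin s → ℕ}

/-- The `m`-th vector of the Jordan chain `(i, j)`, extended by `0` past the top of the chain. -/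
noncomputable def chainVec (b : Basis (PyramidBox p r) K V) (i : Fin s) (j : Fin (r i))
    (m : ℕ) : V :=
  if h : m < p i then b ⟨i, j, ⟨m, h⟩⟩ else 0

theorem chainVec_of_le (b : Basis (PyramidBox p r) K V) {i : Fin s} (j : Fin (r i)) {m : ℕ}
    (hm : p i ≤ m) : chainVec b i j m = 0 :=
  dif_neg (by omega)

theorem chainVec_ext (b : Basis (PyramidBox p r) K V) {f g : Module.End K V}
    (h : ∀ i j m, m < p i → f (chainVec b i j m) = g (chainVec b i j m)) : f = g :=
  b.ext fun ⟨i, j, m⟩ => by simpa [chainVec] using h i j m m.isLt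

structure IsPyramidBasis (b : Basis (PyramidBox p r) K V) (F Ft : Module.End K V)
    (Qplus Qminus : ℕ → Module.End K V) : Prop where
  F_apply : ∀ i j m, F (chainVec b i j m) = chainVec b i j (m + 1)
  Ft_apply_succ : ∀ i j m, m + 1 < p i → Ft (chainVec b i j (m + 1)) = chainVec b i j m
  Ft_apply_zero : ∀ i j, Ft (chainVec b i j 0) = 0
  Qplus_apply : ∀ n i j m,
    Qplus n (chainVec b i j m) = if m = 0 ∧ p i = n + 1 then chainVec b i j m else 0
  Qminus_apply : ∀ n i j m,
    Qminus n (chainVec b i j m) = if m + 1 = p i ∧ p i = n + 1 then chainVec b i j m else 0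

namespace IsPyramidBasis

variable {b : Basis (PyramidBox p r) K V} {F Ft : Module.End K V}
  {Qplus Qminus : ℕ → Module.End K V}

theorem of_basis_apply
    (hF : ∀ x : PyramidBox p r,
      F (b x) = if h : (x.2.2 : ℕ) + 1 < p x.1
        then b ⟨x.1, x.2.1, ⟨(x.2.2 : ℕ) + 1, h⟩⟩ else 0)
    (hFt : ∀ x : PyramidBox p r,
      Ft (b x) = if 0 < (x.2.2 : ℕ)
        then b ⟨x.1, x.2.1, ⟨(x.2.2 : ℕ) - 1, Nat.lt_of_le_of_lt (Nat.sub_le _ _) x.2.2.isLt⟩⟩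
        else 0)
    (hQplus : ∀ (n : ℕ) (x : PyramidBox p r),
      Qplus n (b x) = if ((x.2.2 : ℕ) = 0 ∧ p x.1 = n + 1) then b x else 0)
    (hQminus : ∀ (n : ℕ) (x : PyramidBox p r),
      Qminus n (b x) = if ((x.2.2 : ℕ) + 1 = p x.1 ∧ p x.1 = n + 1) then b x else 0) :
    IsPyramidBasis b F Ft Qplus Qminus where
  F_apply i j m := by
    by_cases hm : m < p i
    · simp [chainVec, hm, hF]
    · simp [chainVec_of_le b j (not_lt.1 hm), chainVec_of_le b j (by omega : p i ≤ m + 1)]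
  Ft_apply_succ i j m hm := by simp [chainVec, hm, Nat.lt_of_succ_lt hm, hFt]
  Ft_apply_zero i j := by
    by_cases h0 : 0 < p i <;> simp [chainVec, h0, hFt]
  Qplus_apply n i j m := by
    by_cases hm : m < p i
    · simp [chainVec, hm, hQplus]
    · simp [chainVec_of_le b j (not_lt.1 hm)]
  Qminus_apply n i j m := by
    by_cases hm : m < p i
    · simp [chainVec, hm, hQminus]
    · simp [chainVec_of_le b j (not_lt.1 hm)]

variable (H : IsPyramidBasis b F Ft Qplus Qminus)
include H

theorem F_pow_apply (a : ℕ) (i : Fin s) (j : Fin (r i)) (m : ℕ) :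
    (F ^ a) (chainVec b i j m) = chainVec b i j (m + a) := by
  induction a with
  | zero => simp
  | succ a ih => rw [pow_succ', Module.End.mul_apply, ih, H.F_apply, add_assoc]

theorem Ft_pow_apply (a : ℕ) {i : Fin s} (j : Fin (r i)) {m : ℕ} (hm : m < p i) :
    (Ft ^ a) (chainVec b i j m) = if a ≤ m then chainVec b i j (m - a) else 0 := by
  induction a with
  | zero => simp
  | succ a ih =>
    rw [pow_succ', Module.End.mul_apply, ih]
    split_ifs with h₁ h₂ h₂
    · obtain ⟨m', hm'⟩ : ∃ m', m - a = m' + 1 := ⟨m - a - 1, by omega⟩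
      rw [hm', H.Ft_apply_succ _ _ _ (by omega)]
      congr 1
      omega
    · rw [show m - a = 0 by omega, H.Ft_apply_zero]
    · omega
    · exact map_zero _

theorem F_pow_mul_Ft_pow_mul_Qminus {a c k : ℕ} (hac : a < c) (hak : a ≤ k) :
    F ^ c * Ft ^ a * Qminus k = 0 :=
  chainVec_ext b fun i j m hm => by
    simp only [Module.End.mul_apply, H.Qminus_apply, LinearMap.zero_apply]
    split_ifs with hq
    · rw [H.Ft_pow_apply a j hm, if_pos (by omega), H.F_pow_apply,
        chainVec_of_le b j (by omega)]
    · simp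

theorem Qplus_mul_Ft_pow_mul_F_pow {a c h : ℕ} (hac : a < c) :
    Qplus h * Ft ^ a * F ^ c = 0 :=
  chainVec_ext b fun i j m hm => by
    simp only [Module.End.mul_apply, H.F_pow_apply, LinearMap.zero_apply]
    by_cases hmc : m + c < p i
    · rw [H.Ft_pow_apply a j hmc, if_pos (by omega), H.Qplus_apply, if_neg (by omega)]
    · simp [chainVec_of_le b j (not_lt.1 hmc)]

theorem F_pow_mul_Qplus {c h : ℕ} (hc : h < c) : F ^ c * Qplus h = 0 :=
  chainVec_ext b fun i j m hm => by
    simp only [Module.End.mul_apply, H.Qplus_apply, LinearMap.zero_apply]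
    split_ifs with hq
    · rw [H.F_pow_apply, chainVec_of_le b j (by omega)]
    · simp

theorem Qminus_mul_F_pow_mul_Ft_pow_mul_Qminus {a c k k' : ℕ} (hak : a ≤ k') :
    Qminus k * F ^ c * Ft ^ a * Qminus k' = if c = a ∧ k = k' then Qminus k' else 0 :=
  chainVec_ext b fun i j m hm => by
    by_cases hca : c = a ∧ k = k'
    · obtain ⟨rfl, rfl⟩ := hca
      simp only [and_self, if_true, Module.End.mul_apply, H.Qminus_apply]
      split_ifs with hq
      · rw [H.Ft_pow_apply c j hm, if_pos (by omega), H.F_pow_apply, H.Qminus_apply,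
          if_pos (by omega)]
        congr 1
        omega
      · simp
    · simp only [if_neg hca, LinearMap.zero_apply, Module.End.mul_apply, H.Qminus_apply]
      split_ifs with hq
      · rw [H.Ft_pow_apply a j hm, if_pos (by omega), H.F_pow_apply, H.Qminus_apply,
          if_neg (by omega)]
      · simp

theorem Qplus_mul_Ft_pow_mul_F_pow_mul_Qplus {a c h h' : ℕ} (hch : c ≤ h') :
    Qplus h' * Ft ^ a * F ^ c * Qplus h = if a = c ∧ h' = h then Qplus h else 0 :=
  chainVec_ext b fun i j m hm => by
    by_cases hac : a = c ∧ h' = h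
    · obtain ⟨rfl, rfl⟩ := hac
      simp only [and_self, if_true, Module.End.mul_apply, H.Qplus_apply]
      split_ifs with hq
      · rw [H.F_pow_apply, H.Ft_pow_apply a j (by omega), if_pos (by omega), H.Qplus_apply,
          if_pos (by omega)]
        congr 1
        omega
      · simp
    · simp only [if_neg hac, LinearMap.zero_apply, Module.End.mul_apply, H.Qplus_apply]
      split_ifs with hq
      · rw [H.F_pow_apply]
        by_cases hc : m + c < p i
        · rw [H.Ft_pow_apply a j hc]
          split_ifs with hac'
          · rw [H.Qplus_apply, if_neg (by omega)]
          · exact map_zero _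
        · rw [chainVec_of_le b j (not_lt.1 hc), map_zero, map_zero]
      · simp

theorem isIdempotentElem_Qplus (h : ℕ) : IsIdempotentElem (Qplus h) := by
  simpa [IsIdempotentElem] using
    H.Qplus_mul_Ft_pow_mul_F_pow_mul_Qplus (a := 0) (h := h) (h' := h) (Nat.zero_le h)

theorem isIdempotentElem_Qminus (k : ℕ) : IsIdempotentElem (Qminus k) := by
  simpa [IsIdempotentElem] using
    H.Qminus_mul_F_pow_mul_Ft_pow_mul_Qminus (c := 0) (k := k) (k' := k) (Nat.zero_le k)

theorem sum_Ft_pow_mul_Qminus_mul_F_pow {N : ℕ} (hN : ∀ i, p i ≤ N) :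
    ∑ k ∈ range N, ∑ ℓ ∈ range (k + 1), Ft ^ ℓ * Qminus k * F ^ ℓ = 1 :=
  chainVec_ext b fun i j m hm => by
    -- only the term that moves `chainVec b i j m` to the top of its chain survives
    have hterm : ∀ k ℓ, (Ft ^ ℓ * Qminus k * F ^ ℓ) (chainVec b i j m) =
        if k = p i - 1 then if ℓ = p i - 1 - m then chainVec b i j m else 0 else 0 := by
      intro k ℓ
      rw [Module.End.mul_apply, Module.End.mul_apply, H.F_pow_apply, H.Qminus_apply]
      by_cases hq : m + ℓ + 1 = p i ∧ p i = k + 1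
      · rw [if_pos hq, H.Ft_pow_apply ℓ j (by omega), if_pos (by omega), if_pos (by omega),
          if_pos (by omega), Nat.add_sub_cancel]
      · rw [if_neg hq, map_zero]
        split_ifs <;> first | rfl | omega
    have := hN i
    simp only [LinearMap.sum_apply, hterm, Module.End.one_apply]
    rw [sum_eq_single_of_mem (p i - 1) (mem_range.2 (by omega)) fun k _ hk => by simp [hk]]
    simp only [↓reduceIte, sum_ite_eq', mem_range]
    rw [if_pos (by omega)]

theorem Qminus_mul_mul_Qplus_mem_gfZeroPiece (h k : ℕ) (X : Module.End K V) :
    Qminus k * X * Qplus h ∈ gfZeroPiece (Qminus k) (Qplus h) :=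
  mul_mem_gfZeroPiece (H.isIdempotentElem_Qminus k) (H.isIdempotentElem_Qplus h) X

theorem sum_Ft_pow_mul_Qminus_mul_F_pow_mul_eq_self {N h : ℕ} (hN : ∀ i, p i ≤ N)
    {X : Module.End K V} (hX : F ^ (h + 1) * X = 0) :
    (∑ k ∈ range N, ∑ ℓ ∈ range (min h k + 1), Ft ^ ℓ * Qminus k * F ^ ℓ) * X =
      X := by
  conv_rhs => rw [← one_mul X, ← H.sum_Ft_pow_mul_Qminus_mul_F_pow hN]
  simp only [sum_mul]
  refine sum_congr rfl fun k _ =>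
    sum_subset (range_subset_range.2 (by omega)) fun ℓ hℓk hℓ => ?_
  rw [mem_range] at hℓk hℓ
  obtain ⟨d, rfl⟩ : ∃ d, ℓ = d + (h + 1) := ⟨ℓ - (h + 1), by omega⟩
  rw [pow_add F d, mul_assoc, mul_assoc (F ^ d), hX, mul_zero, mul_zero]

theorem eq_of_commute_of_mul_Qplus_eq {N : ℕ} (hN : ∀ i, p i ≤ N) {C D : Module.End K V}
    (hC : Commute F C) (hD : Commute F D) (h : ∀ n < N, C * Qplus n = D * Qplus n) : C = D :=
  chainVec_ext b fun i j m hm => by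
    have hv : chainVec b i j m = (F ^ m * Qplus (p i - 1)) (chainVec b i j 0) := by
      rw [Module.End.mul_apply, H.Qplus_apply, if_pos ⟨rfl, by omega⟩, H.F_pow_apply, zero_add]
    have hCD : C * (F ^ m * Qplus (p i - 1)) = D * (F ^ m * Qplus (p i - 1)) := by
      rw [← mul_assoc, ← (hC.pow_left m).eq, mul_assoc, h _ (by have := hN i; omega),
        ← mul_assoc, (hD.pow_left m).eq, mul_assoc]
    rw [hv, ← Module.End.mul_apply, hCD, Module.End.mul_apply]

theorem commute_F_phiMap {h k ℓ : ℕ} {A : Module.End K V}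
    (hA : A ∈ gfZeroPiece (Qminus k) (Qplus h)) (hℓ : ℓ ≤ k) :
    Commute F (phiMap F Ft ℓ A) := by
  have hA' := mem_gfZeroPiece.1 hA
  rw [phiMap_apply]
  refine commute_sum_pow_mul_mul_pow_sub ?_ ?_
  · rw [← hA']
    simp only [← mul_assoc]
    rw [H.F_pow_mul_Ft_pow_mul_Qminus (Nat.lt_succ_self ℓ) hℓ, zero_mul, zero_mul, zero_mul]
  · calc Ft ^ ℓ * A * Ft ^ ℓ * F ^ (ℓ + 1)
        = Ft ^ ℓ * Qminus k * A * (Qplus h * Ft ^ ℓ * F ^ (ℓ + 1)) := by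
          conv_lhs => rw [← hA']
          simp only [mul_assoc]
      _ = 0 := by rw [H.Qplus_mul_Ft_pow_mul_F_pow (Nat.lt_succ_self ℓ), mul_zero]

theorem phiMap_mul_Qplus {h k ℓ : ℕ} {A : Module.End K V}
    (hA : A ∈ gfZeroPiece (Qminus k) (Qplus h)) (hℓ : ℓ ≤ h) (h₀ : ℕ) :
    phiMap F Ft ℓ A * Qplus h₀ = if h = h₀ then Ft ^ ℓ * A else 0 := by
  have hAQ := mul_eq_of_mem_gfZeroPiece_right (H.isIdempotentElem_Qplus h) hA
  have hterm : ∀ i ∈ range (ℓ + 1),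
      F ^ i * (Ft ^ ℓ * A * Ft ^ ℓ) * F ^ (ℓ - i) * Qplus h₀ =
        if i = 0 then (if h = h₀ then Ft ^ ℓ * A else 0) else 0 := by
    intro i hi
    rw [mem_range] at hi
    calc _ = F ^ i * (Ft ^ ℓ * A) * (Qplus h * Ft ^ ℓ * F ^ (ℓ - i) * Qplus h₀) := by
          conv_lhs => rw [← hAQ]
          simp only [mul_assoc]
      _ = _ := by
          rw [H.Qplus_mul_Ft_pow_mul_F_pow_mul_Qplus (by omega)]
          by_cases hi0 : i = 0 ∧ h = h₀
          · obtain ⟨rfl, rfl⟩ := hi0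
            rw [if_pos ⟨by omega, rfl⟩, if_pos rfl, if_pos rfl, pow_zero, one_mul, mul_assoc,
              hAQ]
          · rw [if_neg (by omega), mul_zero]
            split_ifs <;> first | rfl | omega
  rw [phiMap_apply, sum_mul, sum_congr rfl hterm, sum_ite_eq', if_pos (by simp)]

theorem Qminus_mul_F_pow_mul_phiMap_mul_Qplus {h k ℓ h' k' ℓ' : ℕ} {A : Module.End K V}
    (hA : A ∈ gfZeroPiece (Qminus k') (Qplus h')) (hℓh : ℓ' ≤ h') (hℓk : ℓ' ≤ k') :
    Qminus k * F ^ ℓ * phiMap F Ft ℓ' A * Qplus h =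
      if (h, k, ℓ) = (h', k', ℓ') then A else 0 := by
  rw [mul_assoc, H.phiMap_mul_Qplus hA hℓh]
  by_cases hh : h' = h
  · subst hh
    rw [if_pos rfl]
    have hQA := mul_eq_of_mem_gfZeroPiece_left (H.isIdempotentElem_Qminus k') hA
    calc Qminus k * F ^ ℓ * (Ft ^ ℓ' * A) = Qminus k * F ^ ℓ * Ft ^ ℓ' * Qminus k' * A := by
          rw [mul_assoc _ (Qminus k') A, hQA, ← mul_assoc]
      _ = _ := by
          rw [H.Qminus_mul_F_pow_mul_Ft_pow_mul_Qminus hℓk]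
          split_ifs <;> simp_all
  · rw [if_neg hh, mul_zero, if_neg fun he => hh (congrArg Prod.fst he).symm]

theorem iSupIndep_gfPiece (N : ℕ) :
    iSupIndep fun t : GfIndex N => gfPiece F Ft Qplus Qminus t.1 := by
  have key : ∀ t t' : GfIndex N,
      ∀ x ∈ gfPiece F Ft Qplus Qminus t'.1,
        phiMap F Ft t.1.2.2 (Qminus t.1.2.1 * F ^ t.1.2.2 * x * Qplus t.1.1) =
          if t.1 = t'.1 then x else 0 := by
    rintro ⟨⟨h, k, ℓ⟩, _⟩ ⟨⟨h', k', ℓ'⟩, _, _, hℓ'⟩ x hx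
    obtain ⟨A, hA, rfl⟩ := Submodule.mem_map.1 hx
    rw [H.Qminus_mul_F_pow_mul_phiMap_mul_Qplus hA (le_min_iff.1 hℓ').1 (le_min_iff.1 hℓ').2]
    split_ifs with he
    · cases he
      rfl
    · exact map_zero _
  refine iSupIndep_of_proj (fun t => (phiMap F Ft t.1.2.2).comp
      ((LinearMap.mulRight K (Qplus t.1.1)).comp
        (LinearMap.mulLeft K (Qminus t.1.2.1 * F ^ t.1.2.2))))
    (fun t x hx => (key t t x hx).trans (if_pos rfl))
    (fun t t' hne x hx => (key t t' x hx).trans (if_neg fun he => hne (Subtype.ext he)))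

theorem sum_phiMap_eq_self {N : ℕ} (hN : ∀ i, p i ≤ N) {B : Module.End K V}
    (hB : Commute F B) :
    ∑ h ∈ range N, ∑ k ∈ range N, ∑ ℓ ∈ range (min h k + 1),
      phiMap F Ft ℓ (Qminus k * (F ^ ℓ * B) * Qplus h) = B := by
  have hcomm : Commute F (∑ h ∈ range N, ∑ k ∈ range N, ∑ ℓ ∈ range (min h k + 1),
      phiMap F Ft ℓ (Qminus k * (F ^ ℓ * B) * Qplus h)) :=
    .sum_right _ _ _ fun h _ => .sum_right _ _ _ fun k _ => .sum_right _ _ _ fun ℓ hℓ =>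
      H.commute_F_phiMap (H.Qminus_mul_mul_Qplus_mem_gfZeroPiece h k _)
        (by rw [mem_range] at hℓ; omega)
  refine H.eq_of_commute_of_mul_Qplus_eq hN hcomm hB fun h₀ hh₀ => ?_
  have hB₀ : F ^ (h₀ + 1) * (B * Qplus h₀) = 0 := by
    rw [← mul_assoc, (hB.pow_left _).eq, mul_assoc, H.F_pow_mul_Qplus (Nat.lt_succ_self h₀),
      mul_zero]
  calc (∑ h ∈ range N, ∑ k ∈ range N, ∑ ℓ ∈ range (min h k + 1),
        phiMap F Ft ℓ (Qminus k * (F ^ ℓ * B) * Qplus h)) * Qplus h₀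
      = ∑ k ∈ range N, ∑ ℓ ∈ range (min h₀ k + 1),
          Ft ^ ℓ * (Qminus k * (F ^ ℓ * B) * Qplus h₀) := by
        simp only [sum_mul]
        refine (sum_eq_single_of_mem h₀ (mem_range.2 hh₀) fun h _ hne =>
          sum_eq_zero fun k _ => sum_eq_zero fun ℓ hℓ => ?_).trans
            (sum_congr rfl fun k _ => sum_congr rfl fun ℓ hℓ => ?_)
        · rw [mem_range] at hℓ
          rw [H.phiMap_mul_Qplus (H.Qminus_mul_mul_Qplus_mem_gfZeroPiece h k _) (by omega),
            if_neg hne]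
        · rw [mem_range] at hℓ
          rw [H.phiMap_mul_Qplus (H.Qminus_mul_mul_Qplus_mem_gfZeroPiece h₀ k _) (by omega),
            if_pos rfl]
    _ = (∑ k ∈ range N, ∑ ℓ ∈ range (min h₀ k + 1), Ft ^ ℓ * Qminus k * F ^ ℓ) *
          (B * Qplus h₀) := by
        simp only [sum_mul, mul_assoc]
    _ = B * Qplus h₀ := H.sum_Ft_pow_mul_Qminus_mul_F_pow_mul_eq_self hN hB₀

theorem iSup_gfPiece_eq_ker {N : ℕ} (hN : ∀ i, p i ≤ N) :
    ⨆ t : GfIndex N, gfPiece F Ft Qplus Qminus t.1 =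
      LinearMap.ker (LinearMap.mulLeft K F - LinearMap.mulRight K F) := by
  refine le_antisymm (iSup_le fun ⟨⟨h, k, ℓ⟩, _, _, hℓ⟩ => ?_) fun B hB => ?_
  · intro _ hx
    obtain ⟨A, hA, rfl⟩ := Submodule.mem_map.1 hx
    exact mem_ker_mulLeft_sub_mulRight.2 (H.commute_F_phiMap hA (le_min_iff.1 hℓ).2)
  · rw [← H.sum_phiMap_eq_self hN (mem_ker_mulLeft_sub_mulRight.1 hB)]
    refine sum_mem fun h hh => sum_mem fun k hk => sum_mem fun ℓ hℓ => ?_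
    rw [mem_range] at hh hk hℓ
    exact Submodule.mem_iSup_of_mem ⟨(h, k, ℓ), hh, hk, Nat.lt_succ_iff.1 hℓ⟩
      (Submodule.mem_map_of_mem (H.Qminus_mul_mul_Qplus_mem_gfZeroPiece h k _))

end IsPyramidBasis

end Pyramid

end Endomorphisms

theorem stmt5_general {K : Type*} [Field K]
    {V : Type*} [AddCommGroup V] [Module K V]
    {s : ℕ} (hs : 0 < s) (p r : Fin s → ℕ) (hp : StrictAnti p)
    (b : Module.Basis (PyramidBox p r) K V)
    (F Ft : Module.End K V) (Qplus Qminus : ℕ → Module.End K V)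
    (hF : ∀ x : PyramidBox p r,
      F (b x) = if h : (x.2.2 : ℕ) + 1 < p x.1
        then b ⟨x.1, x.2.1, ⟨(x.2.2 : ℕ) + 1, h⟩⟩ else 0)
    (hFt : ∀ x : PyramidBox p r,
      Ft (b x) = if 0 < (x.2.2 : ℕ)
        then b ⟨x.1, x.2.1, ⟨(x.2.2 : ℕ) - 1, Nat.lt_of_le_of_lt (Nat.sub_le _ _) x.2.2.isLt⟩⟩
        else 0)
    (hQplus : ∀ (n : ℕ) (x : PyramidBox p r),
      Qplus n (b x) = if ((x.2.2 : ℕ) = 0 ∧ p x.1 = n + 1) then b x else 0)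
    (hQminus : ∀ (n : ℕ) (x : PyramidBox p r),
      Qminus n (b x) = if ((x.2.2 : ℕ) + 1 = p x.1 ∧ p x.1 = n + 1) then b x else 0) :
    (∀ t : {t : ℕ × ℕ × ℕ // t.1 < p ⟨0, hs⟩ ∧ t.2.1 < p ⟨0, hs⟩ ∧ t.2.2 ≤ min t.1 t.2.1},
      Disjoint
        (Submodule.map (phiMap F Ft t.1.2.2) (gfZeroPiece (Qminus t.1.2.1) (Qplus t.1.1)))
        (⨆ u : {t : ℕ × ℕ × ℕ // t.1 < p ⟨0, hs⟩ ∧ t.2.1 < p ⟨0, hs⟩ ∧ t.2.2 ≤ min t.1 t.2.1},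
          ⨆ _ : u ≠ t,
            Submodule.map (phiMap F Ft u.1.2.2) (gfZeroPiece (Qminus u.1.2.1) (Qplus u.1.1))))
    ∧ (⨆ t : {t : ℕ × ℕ × ℕ // t.1 < p ⟨0, hs⟩ ∧ t.2.1 < p ⟨0, hs⟩ ∧ t.2.2 ≤ min t.1 t.2.1},
        Submodule.map (phiMap F Ft t.1.2.2) (gfZeroPiece (Qminus t.1.2.1) (Qplus t.1.1)))
      = LinearMap.ker (LinearMap.mulLeft K F - LinearMap.mulRight K F) := by
  have H := IsPyramidBasis.of_basis_apply hF hFt hQplus hQminus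
  have hN : ∀ i, p i ≤ p ⟨0, hs⟩ := fun i => hp.antitone (Nat.zero_le (i : ℕ))
  exact ⟨H.iSupIndep_gfPiece _, H.iSup_gfPiece_eq_ker hN⟩

/-- the centralizer `g^f` of the nilpotent `F` in `gl(V)` decomposes as the
direct sum `g^f = ⊕_{h,k=0}^{p₁-1} ⊕_{ℓ=0}^{min(h,k)} φ_ℓ(g₀^f(h,k))`: the family of
subspaces `φ_ℓ(g₀^f(h,k))` is independent and its supremum is `g^f`. -/
theorem stmt5 {K : Type*} [Field K] [CharZero K]
    {V : Type*} [AddCommGroup V] [Module K V]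
    {s : ℕ} (hs : 0 < s) (p r : Fin s → ℕ) (hp : StrictAnti p)
    (hp0 : ∀ i, 0 < p i) (hr : ∀ i, 0 < r i)
    (b : Module.Basis (PyramidBox p r) K V)
    (F Ft : Module.End K V) (Qplus Qminus : ℕ → Module.End K V)
    (hF : ∀ x : PyramidBox p r,
      F (b x) = if h : (x.2.2 : ℕ) + 1 < p x.1
        then b ⟨x.1, x.2.1, ⟨(x.2.2 : ℕ) + 1, h⟩⟩ else 0)
    (hFt : ∀ x : PyramidBox p r,
      Ft (b x) = if 0 < (x.2.2 : ℕ)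
        then b ⟨x.1, x.2.1, ⟨(x.2.2 : ℕ) - 1, Nat.lt_of_le_of_lt (Nat.sub_le _ _) x.2.2.isLt⟩⟩
        else 0)
    (hQplus : ∀ (n : ℕ) (x : PyramidBox p r),
      Qplus n (b x) = if ((x.2.2 : ℕ) = 0 ∧ p x.1 = n + 1) then b x else 0)
    (hQminus : ∀ (n : ℕ) (x : PyramidBox p r),
      Qminus n (b x) = if ((x.2.2 : ℕ) + 1 = p x.1 ∧ p x.1 = n + 1) then b x else 0) :
    (∀ t : {t : ℕ × ℕ × ℕ // t.1 < p ⟨0, hs⟩ ∧ t.2.1 < p ⟨0, hs⟩ ∧ t.2.2 ≤ min t.1 t.2.1},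
      Disjoint
        (Submodule.map (phiMap F Ft t.1.2.2) (gfZeroPiece (Qminus t.1.2.1) (Qplus t.1.1)))
        (⨆ u : {t : ℕ × ℕ × ℕ // t.1 < p ⟨0, hs⟩ ∧ t.2.1 < p ⟨0, hs⟩ ∧ t.2.2 ≤ min t.1 t.2.1},
          ⨆ _ : u ≠ t,
            Submodule.map (phiMap F Ft u.1.2.2) (gfZeroPiece (Qminus u.1.2.1) (Qplus u.1.1))))
    ∧ (⨆ t : {t : ℕ × ℕ × ℕ // t.1 < p ⟨0, hs⟩ ∧ t.2.1 < p ⟨0, hs⟩ ∧ t.2.2 ≤ min t.1 t.2.1},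
        Submodule.map (phiMap F Ft t.1.2.2) (gfZeroPiece (Qminus t.1.2.1) (Qplus t.1.1)))
      = LinearMap.ker (LinearMap.mulLeft K F - LinearMap.mulRight K F) :=
  stmt5_general hs p r hp b F Ft Qplus Qminus hF hFt hQplus hQminus
end

section
/- Let R be a unital associative algebra, V, Ṽ finite-dimensional vector spaces with decompositions V = U ⊕ U^⊥, Ṽ = W ⊕ W^⊥, and A ∈ R ⊗ Hom(V, Ṽ) invertible. Then the generalized quasideterminant |A|_{U,W} := (1_U A^{-1} 1_W)^{-1} ∈ R ⊗ Hom(U,W) exists if and only if 1_{W^⊥} A 1_{U^⊥} ∈ R ⊗ Hom(U^⊥, W^⊥) is invertible, and in that case |A|_{U,W} = 1_W (A − A 1_{U^⊥} (1_{W^⊥} A 1_{U^⊥})^{-1} 1_{W^⊥} A) 1_U. -/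
/-- generalized quasideterminants.  Work with `R ⊗ Hom(V, Ṽ)` realized as
matrices over `R` with block decompositions `V = U ⊕ U'` and `Ṽ = W ⊕ W'`.  Let
`A : Matrix (W ⊕ W') (U ⊕ U') R` be invertible with inverse `B`.  Then the generalized
quasideterminant `|A|_{U,W} = (1_U A⁻¹ 1_W)⁻¹` exists (i.e. the `(U,W)` block of `B` is
invertible) if and only if `1_{W'} A 1_{U'}` (the `(W',U')` block of `A`) is invertible,
and in that case `|A|_{U,W} = A₁₁ - A₁₂ (A₂₂)⁻¹ A₂₁`. -/
theorem stmt6 {R : Type*} [Ring R]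
    {U U' W W' : Type*} [Fintype U] [Fintype U'] [Fintype W] [Fintype W']
    [DecidableEq U] [DecidableEq U'] [DecidableEq W] [DecidableEq W']
    (A : Matrix (W ⊕ W') (U ⊕ U') R) (B : Matrix (U ⊕ U') (W ⊕ W') R)
    (hAB : A * B = 1) (hBA : B * A = 1) :
    ((∃ C : Matrix W U R, Matrix.toBlocks₁₁ B * C = 1 ∧ C * Matrix.toBlocks₁₁ B = 1) ↔
      ∃ D : Matrix U' W' R, Matrix.toBlocks₂₂ A * D = 1 ∧ D * Matrix.toBlocks₂₂ A = 1) ∧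
    ∀ C : Matrix W U R, Matrix.toBlocks₁₁ B * C = 1 → C * Matrix.toBlocks₁₁ B = 1 →
      ∀ D : Matrix U' W' R, Matrix.toBlocks₂₂ A * D = 1 → D * Matrix.toBlocks₂₂ A = 1 →
        C = Matrix.toBlocks₁₁ A - Matrix.toBlocks₁₂ A * D * Matrix.toBlocks₂₁ A := by
  set a11 := Matrix.toBlocks₁₁ A with ha11
  set a12 := Matrix.toBlocks₁₂ A with ha12
  set a21 := Matrix.toBlocks₂₁ A with ha21
  set a22 := Matrix.toBlocks₂₂ A with ha22
  set b11 := Matrix.toBlocks₁₁ B with hb11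
  set b12 := Matrix.toBlocks₁₂ B with hb12
  set b21 := Matrix.toBlocks₂₁ B with hb21
  set b22 := Matrix.toBlocks₂₂ B with hb22
  have h1 := hAB
  have h2 := hBA
  rw [← Matrix.fromBlocks_toBlocks A, ← Matrix.fromBlocks_toBlocks B,
    Matrix.fromBlocks_multiply, ← Matrix.fromBlocks_one, Matrix.fromBlocks_inj] at h1 h2
  rw [← ha11, ← ha12, ← ha21, ← ha22, ← hb11, ← hb12, ← hb21, ← hb22] at h1 h2
  obtain ⟨e1, e2, e3, e4⟩ := h1
  obtain ⟨f1, f2, f3, f4⟩ := h2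
  have key : ∀ D : Matrix U' W' R, a22 * D = 1 → D * a22 = 1 →
      b11 * (a11 - a12 * D * a21) = 1 ∧ (a11 - a12 * D * a21) * b11 = 1 := by
    intro D hD1 hD2
    constructor
    · have h12 : b11 * a12 = -(b12 * a22) := by
        rw [eq_neg_iff_add_eq_zero]; exact f2
      have k : a22 * (D * a21) = a21 := by rw [← Matrix.mul_assoc, hD1, Matrix.one_mul]
      rw [Matrix.mul_sub, Matrix.mul_assoc a12 D a21, ← Matrix.mul_assoc b11 a12, h12,
        Matrix.neg_mul, sub_neg_eq_add, Matrix.mul_assoc b12 a22, k]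
      exact f1
    · have h21 : a21 * b11 = -(a22 * b21) := by
        rw [eq_neg_iff_add_eq_zero]; exact e3
      have k : D * (a22 * b21) = b21 := by rw [← Matrix.mul_assoc, hD2, Matrix.one_mul]
      rw [Matrix.sub_mul, Matrix.mul_assoc (a12 * D) a21 b11, h21, Matrix.mul_neg,
        sub_neg_eq_add, Matrix.mul_assoc a12 D, k]
      exact e1
  refine ⟨⟨?_, ?_⟩, ?_⟩
  · rintro ⟨C, hC1, hC2⟩
    refine ⟨b22 - b21 * C * b12, ?_, ?_⟩
    · have h21 : a22 * b21 = -(a21 * b11) := by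
        rw [eq_neg_iff_add_eq_zero, add_comm]; exact e3
      have k : b11 * (C * b12) = b12 := by rw [← Matrix.mul_assoc, hC1, Matrix.one_mul]
      rw [Matrix.mul_sub, Matrix.mul_assoc b21 C b12, ← Matrix.mul_assoc a22 b21, h21,
        Matrix.neg_mul, sub_neg_eq_add, Matrix.mul_assoc a21 b11, k, add_comm]
      exact e4
    · have h12 : b12 * a22 = -(b11 * a12) := by
        rw [eq_neg_iff_add_eq_zero, add_comm]; exact f2
      have k : C * (b11 * a12) = a12 := by rw [← Matrix.mul_assoc, hC2, Matrix.one_mul]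
      rw [Matrix.sub_mul, Matrix.mul_assoc (b21 * C) b12 a22, h12, Matrix.mul_neg,
        sub_neg_eq_add, Matrix.mul_assoc b21 C, k, add_comm]
      exact f4
  · rintro ⟨D, hD1, hD2⟩
    exact ⟨_, key D hD1 hD2⟩
  · intro C hC1 hC2 D hD1 hD2
    have h := (key D hD1 hD2).1
    calc C = C * (b11 * (a11 - a12 * D * a21)) := by rw [h, Matrix.mul_one]
      _ = (C * b11) * (a11 - a12 * D * a21) := (Matrix.mul_assoc _ _ _).symm
      _ = a11 - a12 * D * a21 := by rw [hC2, Matrix.one_mul]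
end

section
/- Generalized quasideterminants are hereditary: given decompositions V = U ⊕ U^⊥, U = U_1 ⊕ U_1^⊥, Ṽ = W ⊕ W^⊥, W = W_1 ⊕ W_1^⊥, and A ∈ R ⊗ Hom(V,Ṽ), one has ||A|_{U,W}|_{U_1,W_1} = |A|_{U_1,W_1}, provided all quasideterminants involved exist (where the right-hand side is taken with respect to V = U_1 ⊕ (U_1^⊥ ⊕ U^⊥) and Ṽ = W_1 ⊕ (W_1^⊥ ⊕ W^⊥)). -/
/-- hereditary property of generalized quasideterminants.  Work with matrices
over `R` with iterated block decompositions `V = (U₁ ⊕ U₁') ⊕ U'` and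
`Ṽ = (W₁ ⊕ W₁') ⊕ W'`.  Let `A` be invertible with inverse `B`.  Let
`C = |A|_{U,W}` (the inverse of the `(U,W)`-block of `B`), let `E = C⁻¹`, and let
`G = ||A|_{U,W}|_{U₁,W₁}` (the inverse of the `(U₁,W₁)`-block of `E`).  Let `H = |A|_{U₁,W₁}`
(the inverse of the `(U₁,W₁)`-block of `B`, for the decompositions `V = U₁ ⊕ (U₁' ⊕ U')`,
`Ṽ = W₁ ⊕ (W₁' ⊕ W')`).  Then, all these quasideterminants existing, `G = H`. -/
theorem stmt7 {R : Type*} [Ring R]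
    {U₁ U₁' U' W₁ W₁' W' : Type*}
    [Fintype U₁] [Fintype U₁'] [Fintype U'] [Fintype W₁] [Fintype W₁'] [Fintype W']
    [DecidableEq U₁] [DecidableEq U₁'] [DecidableEq U']
    [DecidableEq W₁] [DecidableEq W₁'] [DecidableEq W']
    (A : Matrix ((W₁ ⊕ W₁') ⊕ W') ((U₁ ⊕ U₁') ⊕ U') R)
    (B : Matrix ((U₁ ⊕ U₁') ⊕ U') ((W₁ ⊕ W₁') ⊕ W') R)
    (hAB : A * B = 1) (hBA : B * A = 1)
    (C : Matrix (W₁ ⊕ W₁') (U₁ ⊕ U₁') R)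
    (hC1 : Matrix.toBlocks₁₁ B * C = 1) (hC2 : C * Matrix.toBlocks₁₁ B = 1)
    (E : Matrix (U₁ ⊕ U₁') (W₁ ⊕ W₁') R)
    (hE1 : C * E = 1) (hE2 : E * C = 1)
    (G : Matrix W₁ U₁ R)
    (hG1 : Matrix.toBlocks₁₁ E * G = 1) (hG2 : G * Matrix.toBlocks₁₁ E = 1)
    (H : Matrix W₁ U₁ R)
    (hH1 : (Matrix.of fun (u : U₁) (w : W₁) => B (Sum.inl (Sum.inl u)) (Sum.inl (Sum.inl w)))
        * H = 1)
    (hH2 : H * (Matrix.of fun (u : U₁) (w : W₁) => B (Sum.inl (Sum.inl u)) (Sum.inl (Sum.inl w)))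
        = 1) :
    G = H := by
  have hEB : E = Matrix.toBlocks₁₁ B := by
    calc E = (Matrix.toBlocks₁₁ B * C) * E := by rw [hC1, Matrix.one_mul]
    _ = Matrix.toBlocks₁₁ B * (C * E) := by rw [Matrix.mul_assoc]
    _ = Matrix.toBlocks₁₁ B := by rw [hE1, Matrix.mul_one]
  have hM : Matrix.toBlocks₁₁ E =
      (Matrix.of fun (u : U₁) (w : W₁) => B (Sum.inl (Sum.inl u)) (Sum.inl (Sum.inl w))) := by
    subst hEB
    ext u w
    rfl
  rw [hM] at hG1 hG2
  calc G = G * ((Matrix.of fun (u : U₁) (w : W₁) =>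
        B (Sum.inl (Sum.inl u)) (Sum.inl (Sum.inl w))) * H) := by rw [hH1, Matrix.mul_one]
  _ = (G * (Matrix.of fun (u : U₁) (w : W₁) =>
        B (Sum.inl (Sum.inl u)) (Sum.inl (Sum.inl w)))) * H := by rw [Matrix.mul_assoc]
  _ = H := by rw [hG2, Matrix.one_mul]
end

section
/- With notation as in the previous statement, let U ⊂ V[k] be a graded subspace of the graded module V = ⊕_ℓ V[ℓ]. Then [E_i, 1_U E_j]^1 = δ_{i+j,0} tr(E_0 1_U) 1_{V[k+j]} − dim(U) E_{i+j} 1_{V[k+j]}, where [x⊗X, y⊗Y]^1 := [x,y] ⊗ XY and tr is taken in the second factor. -/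
/-!
Expanding `bE a * bE c` in the basis `bE`, whose coordinates are traces against the dual
family `du`, reduces both halves of the commutator to graded Casimir sums
`∑_{d a = μ} bE a * X * du a`; homogeneity of the trace pairing lets one add or drop degree
restrictions on the summation indices at will. Such a sum does not depend on the choice of
homogeneous trace-dual bases, so it can be computed with the matrix units `E_pq`, `E_qp` of the
weight basis of `V`: for `X` mapping `V[t]` into `V[s]` it is `tr X • 1_{V[t+μ]}` if `s = t`
and `0` otherwise. Applied to `X = du b * 1_U` and, with the roles of the two bases exchanged,
to `X = 1_U`, it yields the two terms of the formula, with `tr 1_U = dim U`.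
-/

open Finset
open LinearMap (trace)
open Module (End Basis)
open scoped TensorProduct

section Grading

variable {K A : Type*} [Field K] [Ring A] [Algebra K A]

theorem lie_mul_eq_smul_of_lie_eq_smul {h x y : A} {m n : K}
    (hx : ⁅h, x⁆ = m • x) (hy : ⁅h, y⁆ = n • y) : ⁅h, x * y⁆ = (m + n) • (x * y) := by
  have : ⁅h, x * y⁆ = ⁅h, x⁆ * y + x * ⁅h, y⁆ := by simp only [Ring.lie_def]; noncomm_ring
  rw [this, hx, hy, smul_mul_assoc, mul_smul_comm, add_smul]

variable {V : Type*} [AddCommGroup V] [Module K V]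

theorem trace_eq_zero_of_lie_eq_smul {H X : End K V} {m : K} (hX : ⁅H, X⁆ = m • X)
    (hm : m ≠ 0) : trace K V X = 0 := by
  have h : trace K V ⁅H, X⁆ = 0 := by
    rw [Ring.lie_def, map_sub, LinearMap.trace_mul_comm, sub_self]
  rw [hX, map_smul, smul_eq_zero] at h
  exact h.resolve_left hm

end Grading

section TraceDual

variable {K V A : Type*} [Field K] [AddCommGroup V] [Module K V] [DecidableEq A]

def IsTraceDual (e f : A → End K V) : Prop :=
  ∀ a b, trace K V (e a * f b) = if a = b then 1 else 0

variable [Fintype A]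

theorem IsTraceDual.linearIndependent {e f : A → End K V} (hdual : IsTraceDual e f) :
    LinearIndependent K f := by
  rw [Fintype.linearIndependent_iff]
  intro g hg b
  simpa [mul_sum, mul_smul_comm, hdual _ _] using congrArg (fun W => trace K V (e b * W)) hg

variable (e : Basis A K (End K V)) {f : A → End K V}

theorem IsTraceDual.repr_eq (hdual : IsTraceDual e f) (W : End K V) (a : A) :
    e.repr W a = trace K V (W * f a) := by
  conv_rhs => rw [← e.sum_repr W]
  simp only [sum_mul, smul_mul_assoc, map_sum, map_smul, hdual _ _]
  simp

theorem IsTraceDual.sum_trace_mul_smul (hdual : IsTraceDual e f) (W : End K V) :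
    ∑ a, trace K V (W * f a) • e a = W := by
  simp_rw [← hdual.repr_eq]
  exact e.sum_repr W

theorem IsTraceDual.tmul_eq_sum {M : Type*} [AddCommGroup M] [Module K M]
    (hdual : IsTraceDual e f) (x : End K V) (y : M) :
    x ⊗ₜ[K] y = ∑ c, e c ⊗ₜ[K] (trace K V (x * f c) • y) := by
  conv_lhs => rw [← hdual.sum_trace_mul_smul e x]
  simp only [TensorProduct.sum_tmul, TensorProduct.smul_tmul]

theorem IsTraceDual.sum_sum_tmul_eq {M : Type*} [AddCommGroup M] [Module K M]
    (hdual : IsTraceDual e f) (s t : Finset A) (x : A → A → End K V) (y : A → A → M) :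
    ∑ a ∈ s, ∑ c ∈ t, x a c ⊗ₜ[K] y a c
      = ∑ b, e b ⊗ₜ[K] ∑ a ∈ s, ∑ c ∈ t, trace K V (x a c * f b) • y a c := by
  simp only [TensorProduct.tmul_sum]
  conv_rhs => rw [sum_comm]
  refine sum_congr rfl fun a _ => ?_
  conv_rhs => rw [sum_comm]
  exact sum_congr rfl fun c _ => hdual.tmul_eq_sum e _ _

noncomputable def traceDualBasis (hdual : IsTraceDual e f) : Basis A K (End K V) :=
  haveI := Module.Finite.of_basis e
  basisOfLinearIndependentOfCardEqFinrank' f hdual.linearIndependent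
    (Module.finrank_eq_card_basis e).symm

@[simp]
theorem coe_traceDualBasis (hdual : IsTraceDual e f) : ⇑(traceDualBasis e hdual) = f := by
  simp [traceDualBasis]

theorem isTraceDual_traceDualBasis (hdual : IsTraceDual e f) :
    IsTraceDual (traceDualBasis e hdual) e := by
  intro a b
  rw [coe_traceDualBasis, LinearMap.trace_mul_comm, hdual]
  exact if_congr eq_comm rfl rfl

theorem IsTraceDual.sum_trace_mul_smul_dual (hdual : IsTraceDual e f) (W : End K V) :
    ∑ a, trace K V (W * e a) • f a = W := by
  simpa using (isTraceDual_traceDualBasis e hdual).sum_trace_mul_smul _ W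

end TraceDual

section GradedDual

variable {K V A B : Type*} [Field K] [DecidableEq K] [AddCommGroup V] [Module K V]
  [Fintype A] [DecidableEq A] [Fintype B] [DecidableEq B] {H : End K V}
  (e : Basis A K (End K V)) {f : A → End K V} {m : A → K}

theorem IsTraceDual.sum_filter_trace_mul_smul (hdual : IsTraceDual e f)
    (hf : ∀ a, ⁅H, f a⁆ = -m a • f a) {W : End K V} {ν : K} (hW : ⁅H, W⁆ = ν • W) (μ : K) :
    ∑ a ∈ univ.filter (fun a => m a = μ), trace K V (W * f a) • e a
      = if ν = μ then W else 0 := by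
  have htrace : ∀ a, m a ≠ ν → trace K V (W * f a) = 0 := fun a ha =>
    trace_eq_zero_of_lie_eq_smul (lie_mul_eq_smul_of_lie_eq_smul hW (hf a))
      (fun h => ha (by linear_combination -h))
  split_ifs with hνμ
  · subst hνμ
    rw [sum_filter_of_ne fun a _ h => by_contra fun ha => h (by rw [htrace a ha, zero_smul])]
    exact hdual.sum_trace_mul_smul e W
  · refine sum_eq_zero fun a ha => ?_
    rw [htrace a ((mem_filter.mp ha).2 ▸ Ne.symm hνμ), zero_smul]

theorem IsTraceDual.sum_filter_trace_mul_smul_dual (hdual : IsTraceDual e f)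
    (he : ∀ a, ⁅H, e a⁆ = m a • e a) {W : End K V} {ν : K} (hW : ⁅H, W⁆ = ν • W) (μ : K) :
    ∑ a ∈ univ.filter (fun a => m a = μ), trace K V (W * e a) • f a
      = if ν + μ = 0 then W else 0 := by
  have := (isTraceDual_traceDualBasis e hdual).sum_filter_trace_mul_smul _ (m := fun a => -m a)
    (fun a => by rw [neg_neg]; exact he a) hW (-μ)
  simp only [coe_traceDualBasis, neg_inj] at this
  simpa only [eq_neg_iff_add_eq_zero] using this

theorem IsTraceDual.sum_filter_mul_mul_eq (hdual : IsTraceDual e f)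
    (hf : ∀ a, ⁅H, f a⁆ = -m a • f a)
    (e' : Basis B K (End K V)) {f' : B → End K V} {m' : B → K} (hdual' : IsTraceDual e' f')
    (he' : ∀ b, ⁅H, e' b⁆ = m' b • e' b) (X : End K V) (μ : K) :
    ∑ a ∈ univ.filter (fun a => m a = μ), e a * X * f a
      = ∑ b ∈ univ.filter (fun b => m' b = μ), e' b * X * f' b := by
  calc ∑ a ∈ univ.filter (fun a => m a = μ), e a * X * f a
      = ∑ a ∈ univ.filter (fun a => m a = μ), ∑ b,
          trace K V (f a * e' b) • (e a * X * f' b) := by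
        refine sum_congr rfl fun a _ => ?_
        conv_lhs => rw [← hdual'.sum_trace_mul_smul_dual e' (f a)]
        simp only [mul_sum, mul_smul_comm]
    _ = ∑ b, (∑ a ∈ univ.filter (fun a => m a = μ), trace K V (e' b * f a) • e a)
          * X * f' b := by
        rw [sum_comm]
        simp only [sum_mul, smul_mul_assoc, LinearMap.trace_mul_comm K (f _)]
    _ = ∑ b ∈ univ.filter (fun b => m' b = μ), e' b * X * f' b := by
        simp only [hdual.sum_filter_trace_mul_smul e hf (he' _), ite_mul, zero_mul, sum_filter]

end GradedDual

section GradedSpace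

variable {K V J : Type*} [Field K] [DecidableEq K] [AddCommGroup V] [Module K V]
  [Fintype J] [DecidableEq J] (v : Basis J K V) (wt : J → K) {H : End K V}
  {P : K → End K V}

omit [DecidableEq K] [Fintype J] in
theorem Module.Basis.repr_apply_of_apply_eq_smul {L : End K V} {c : J → K}
    (hL : ∀ q, L (v q) = c q • v q) (y : V) (p : J) : v.repr (L y) p = c p * v.repr y p := by
  have : v.coord p ∘ₗ L = c p • v.coord p :=
    v.ext fun q => by by_cases h : q = p <;> simp [hL, h, Ne.symm]
  exact LinearMap.congr_fun this y

omit [Fintype J] in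
theorem Module.Basis.repr_proj_apply
    (hP : ∀ (c : K) (q : J), P c (v q) = if wt q = c then v q else 0) (s : K) (y : V) (p : J) :
    v.repr (P s y) p = if wt p = s then v.repr y p else 0 := by
  rw [v.repr_apply_of_apply_eq_smul (c := fun q => if wt q = s then 1 else 0)
    (fun q => by rw [hP, ite_smul, one_smul, zero_smul]), ite_mul, one_mul, zero_mul]

omit [DecidableEq K] [Fintype J] in
theorem Module.Basis.repr_apply_eq_zero_of_lie_eq_smul (hH : ∀ q, H (v q) = wt q • v q)
    {X : End K V} {m : K} (hX : ⁅H, X⁆ = m • X) {p q : J} (hpq : wt p ≠ wt q + m) :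
    v.repr (X (v q)) p = 0 := by
  have hXv : H (X (v q)) = (wt q + m) • X (v q) := by
    have := LinearMap.congr_fun hX (v q)
    simp only [Ring.lie_def, LinearMap.sub_apply, End.mul_apply, LinearMap.smul_apply,
      hH, map_smul, sub_eq_iff_eq_add] at this
    rw [this, add_smul, add_comm]
  have := v.repr_apply_of_apply_eq_smul hH (X (v q)) p
  rw [hXv, map_smul, Finsupp.smul_apply, smul_eq_mul] at this
  exact (mul_eq_mul_right_iff.mp this).resolve_left (Ne.symm hpq)

omit [Fintype J] in
theorem Module.Basis.mul_proj_eq_proj_add_mul (hH : ∀ q, H (v q) = wt q • v q)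
    (hP : ∀ (c : K) (q : J), P c (v q) = if wt q = c then v q else 0)
    {X : End K V} {m : K} (hX : ⁅H, X⁆ = m • X) (c : K) : X * P c = P (c + m) * X := by
  refine v.ext fun q => v.repr.injective (Finsupp.ext fun p => ?_)
  rw [End.mul_apply, End.mul_apply, hP, v.repr_proj_apply wt hP]
  by_cases hpq : wt p = wt q + m
  · simp only [hpq, add_left_inj]
    split_ifs <;> simp
  · have h0 := v.repr_apply_eq_zero_of_lie_eq_smul wt hH hX hpq
    split_ifs <;> simp [h0]

omit [DecidableEq K] in
theorem Module.Basis.trace_eq_sum_repr (X : End K V) :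
    trace K V X = ∑ p, v.repr (X (v p)) p := by
  simp [LinearMap.trace_eq_matrix_trace K v, Matrix.trace, LinearMap.toMatrix_apply]

omit [DecidableEq K] in
theorem Module.Basis.end_eq_smulRight (p q : J) : v.end (p, q) = (v.coord q).smulRight (v p) :=
  v.ext fun r => by by_cases h : q = r <;> simp [Basis.end_apply_apply, h]

omit [DecidableEq K] in
theorem Module.Basis.isTraceDual_end : IsTraceDual v.end fun b => v.end b.swap := by
  rintro ⟨p, q⟩ ⟨p', q'⟩
  dsimp only
  have := Module.Finite.of_basis v
  have : v.end (p, q) * v.end (q', p') = (v.coord q ∘ₗ v.end (q', p')).smulRight (v p) := by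
    rw [v.end_eq_smulRight]; rfl
  rw [Prod.swap_prod_mk, this, LinearMap.trace_smulRight]
  by_cases h : p' = p <;> by_cases h' : q' = q <;> simp [Basis.end_apply_apply, h, h', Ne.symm]

omit [Fintype J] in
theorem Module.Basis.repr_apply_self_eq_zero_of_proj_mul
    (hP : ∀ (c : K) (q : J), P c (v q) = if wt q = c then v q else 0)
    {X : End K V} {s t : K} (hs : P s * X = X) (ht : X * P t = X) {q : J}
    (hq : ¬(wt q = s ∧ wt q = t)) : v.repr (X (v q)) q = 0 := by
  have hX : X (v q) = P s (X (P t (v q))) := by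
    rw [← End.mul_apply X, ht, ← End.mul_apply, hs]
  rw [hX, v.repr_proj_apply wt hP, hP]
  split_ifs <;> simp_all

theorem Module.Basis.sum_filter_end_mul_mul_end_swap
    (hP : ∀ (c : K) (q : J), P c (v q) = if wt q = c then v q else 0)
    {X : End K V} {s t : K} (hs : P s * X = X) (ht : X * P t = X) (μ : K) :
    ∑ b ∈ univ.filter (fun b : J × J => wt b.1 - wt b.2 = μ), v.end b * X * v.end b.swap
      = if s = t then trace K V X • P (t + μ) else 0 := by
  have diag_sum : ∀ r, ∑ q ∈ univ.filter (fun q => wt r - wt q = μ), v.repr (X (v q)) q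
      = if s = t ∧ wt r = t + μ then trace K V X else 0 := by
    intro r
    have hdiag := fun q => v.repr_apply_self_eq_zero_of_proj_mul wt hP hs ht (q := q)
    split_ifs with hst
    · obtain ⟨rfl, hr⟩ := hst
      rw [v.trace_eq_sum_repr, sum_filter_of_ne fun q _ hq => ?_]
      obtain ⟨hqs, -⟩ := not_not.mp (mt (hdiag q) hq)
      rw [hr, hqs, add_sub_cancel_left]
    · refine sum_eq_zero fun q hq => hdiag q fun ⟨hqs, hqt⟩ => hst ⟨hqs ▸ hqt, ?_⟩
      rw [← hqt, ← (mem_filter.mp hq).2, add_sub_cancel]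
  refine v.ext fun r => ?_
  rw [LinearMap.sum_apply]
  simp only [End.mul_apply, Basis.end_apply_apply, Prod.fst_swap, Prod.snd_swap, sum_filter,
    Fintype.sum_prod_type]
  rw [sum_eq_single r (fun p _ hp => sum_eq_zero fun q _ => by simp [hp]) (by simp)]
  simp only [if_true, ← sum_filter, v.end_eq_smulRight, LinearMap.smulRight_apply,
    Basis.coord_apply, ← sum_smul, diag_sum]
  by_cases hst : s = t
  · by_cases hr : wt r = t + μ <;> simp [hst, hr, hP]
  · simp [hst]

end GradedSpace

section Casimir

variable {K V J A : Type*} [Field K] [DecidableEq K] [AddCommGroup V] [Module K V]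
  [Fintype J] [DecidableEq J] (v : Basis J K V) (wt : J → K) {H : End K V}
  {P : K → End K V} [Fintype A] [DecidableEq A] (e : Basis A K (End K V)) {f : A → End K V}
  {m : A → K}

theorem sum_filter_mul_mul_of_isTraceDual (hH : ∀ q, H (v q) = wt q • v q)
    (hP : ∀ (c : K) (q : J), P c (v q) = if wt q = c then v q else 0)
    (hdual : IsTraceDual e f) (hf : ∀ a, ⁅H, f a⁆ = -m a • f a)
    {X : End K V} {s t : K} (hs : P s * X = X) (ht : X * P t = X) (μ : K) :
    ∑ a ∈ univ.filter (fun a => m a = μ), e a * X * f a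
      = if s = t then trace K V X • P (t + μ) else 0 := by
  rw [hdual.sum_filter_mul_mul_eq e hf v.end v.isTraceDual_end
    (fun b => v.lie_end_of_apply_eq_smul wt H hH b.1 b.2) X μ]
  exact v.sum_filter_end_mul_mul_end_swap wt hP hs ht μ

theorem sum_filter_dual_mul_mul_of_isTraceDual (hH : ∀ q, H (v q) = wt q • v q)
    (hP : ∀ (c : K) (q : J), P c (v q) = if wt q = c then v q else 0)
    (hdual : IsTraceDual e f) (he : ∀ a, ⁅H, e a⁆ = m a • e a)
    {X : End K V} {s t : K} (hs : P s * X = X) (ht : X * P t = X) (μ : K) :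
    ∑ a ∈ univ.filter (fun a => m a = μ), f a * X * e a
      = if s = t then trace K V X • P (t + -μ) else 0 := by
  have := sum_filter_mul_mul_of_isTraceDual v wt (traceDualBasis e hdual) (m := fun a => -m a)
    hH hP (isTraceDual_traceDualBasis e hdual) (fun a => by rw [neg_neg]; exact he a) hs ht (-μ)
  simpa only [coe_traceDualBasis, neg_inj] using this

variable {k : K} {Q : End K V}

theorem sum_sum_trace_mul_mul_smul_of_isTraceDual (hH : ∀ q, H (v q) = wt q • v q)
    (hP : ∀ (c : K) (q : J), P c (v q) = if wt q = c then v q else 0)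
    (hdual : IsTraceDual e f) (he : ∀ a, ⁅H, e a⁆ = m a • e a)
    (hf : ∀ a, ⁅H, f a⁆ = -m a • f a) (hQ₁ : P k * Q = Q) (hQ₂ : Q * P k = Q)
    (i j : K) (b : A) :
    ∑ a ∈ univ.filter (fun a => m a = i), ∑ c ∈ univ.filter (fun c => m c = j),
        trace K V (e a * e c * f b) • (f a * Q * f c)
      = if m b = i + j then
          (if i + j = 0 then trace K V (f b * Q) • P (k + j) else 0) else 0 := by
  have hfbQ : P (k + -m b) * (f b * Q) = f b * Q := by
    rw [← mul_assoc, ← v.mul_proj_eq_proj_add_mul wt hH hP (hf b) k, mul_assoc, hQ₁]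
  calc _ = ∑ c ∈ univ.filter (fun c => m c = j),
        (∑ a ∈ univ.filter (fun a => m a = i), trace K V (e c * f b * e a) • f a)
          * (Q * f c) := by
        rw [sum_comm]
        refine sum_congr rfl fun c _ => ?_
        rw [sum_mul]
        refine sum_congr rfl fun a _ => ?_
        rw [mul_assoc (e a), LinearMap.trace_mul_comm K (e a), smul_mul_assoc, mul_assoc (f a)]
    _ = ∑ c ∈ univ.filter (fun c => m c = j),
        (if j + -m b + i = 0 then e c * (f b * Q) * f c else 0) := by
        refine sum_congr rfl fun c hc => ?_
        rw [hdual.sum_filter_trace_mul_smul_dual e he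
          (lie_mul_eq_smul_of_lie_eq_smul (he c) (hf b)) i, (mem_filter.mp hc).2]
        simp only [ite_mul, zero_mul, mul_assoc]
    _ = _ := by
        by_cases hb : m b = i + j
        · have hcond : j + -m b + i = 0 := by rw [hb]; ring
          rw [if_pos hb]
          simp only [hcond, if_true]
          rw [sum_filter_mul_mul_of_isTraceDual v wt e hH hP hdual hf hfbQ
            (show f b * Q * P k = f b * Q by rw [mul_assoc, hQ₂]) j]
          simp only [hb, add_eq_left, neg_eq_zero]
        · rw [if_neg hb]
          exact sum_eq_zero fun c _ => if_neg fun h => hb (by linear_combination -h)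

theorem sum_sum_trace_mul_mul_smul_swap_of_isTraceDual (hH : ∀ q, H (v q) = wt q • v q)
    (hP : ∀ (c : K) (q : J), P c (v q) = if wt q = c then v q else 0)
    (hdual : IsTraceDual e f) (he : ∀ a, ⁅H, e a⁆ = m a • e a)
    (hf : ∀ a, ⁅H, f a⁆ = -m a • f a) (hQ₁ : P k * Q = Q) (hQ₂ : Q * P k = Q)
    (i j : K) (b : A) :
    ∑ a ∈ univ.filter (fun a => m a = i), ∑ c ∈ univ.filter (fun c => m c = j),
        trace K V (e c * e a * f b) • (f a * Q * f c)
      = if m b = i + j then trace K V Q • (f b * P (k + j)) else 0 := by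
  calc _ = ∑ a ∈ univ.filter (fun a => m a = i),
        f a * Q * ∑ c ∈ univ.filter (fun c => m c = j), trace K V (e a * f b * e c) • f c := by
        refine sum_congr rfl fun a _ => ?_
        rw [mul_sum]
        refine sum_congr rfl fun c _ => ?_
        rw [mul_assoc (e c), LinearMap.trace_mul_comm K (e c), mul_smul_comm]
    _ = ∑ a ∈ univ.filter (fun a => m a = i),
        (if i + -m b + j = 0 then f a * Q * e a * f b else 0) := by
        refine sum_congr rfl fun a ha => ?_
        rw [hdual.sum_filter_trace_mul_smul_dual e he
          (lie_mul_eq_smul_of_lie_eq_smul (he a) (hf b)) j, (mem_filter.mp ha).2]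
        simp only [mul_ite, mul_zero, mul_assoc]
    _ = _ := by
        by_cases hb : m b = i + j
        · have hcond : i + -m b + j = 0 := by rw [hb]; ring
          rw [if_pos hb]
          simp only [hcond, if_true]
          rw [← sum_mul, sum_filter_dual_mul_mul_of_isTraceDual v wt e hH hP hdual he hQ₁ hQ₂ i,
            if_pos rfl, smul_mul_assoc, v.mul_proj_eq_proj_add_mul wt hH hP (hf b) (k + j)]
          congr 3
          rw [hb]; ring
        · rw [if_neg hb]
          exact sum_eq_zero fun a _ => if_neg fun h => hb (by linear_combination -h)

end Casimir

/-- Here `E_j = ∑_{d a = j} bE a ⊗ du a`, `1_U = Q` and `1_{V[ℓ]} = P ℓ`, so the left-hand side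
is `[E_i, 1_U E_j]¹`. -/
theorem stmt9_general {K : Type*} [Field K] [DecidableEq K]
    {V : Type*} [AddCommGroup V] [Module K V]
    {J : Type*} [Fintype J] [DecidableEq J] (v : Module.Basis J K V) (wt : J → K)
    (H : Module.End K V) (hH : ∀ x, H (v x) = wt x • v x)
    (P : K → Module.End K V)
    (hP : ∀ (c : K) (x : J), P c (v x) = if wt x = c then v x else 0)
    {I : Type*} [Fintype I] [DecidableEq I]
    (bE : Module.Basis I K (Module.End K V)) (du : I → Module.End K V)
    (hdual : ∀ a c, LinearMap.trace K V (bE a * du c) = if a = c then 1 else 0)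
    (d : I → K)
    (hbdeg : ∀ a, ⁅H, bE a⁆ = d a • bE a)
    (hdudeg : ∀ a, ⁅H, du a⁆ = (-(d a)) • du a)
    (k : K) (Q : Module.End K V)
    (hQidem : Q * Q = Q) (hQ1 : P k * Q = Q) (hQ2 : Q * P k = Q)
    (i j : K) :
    ∑ a ∈ Finset.univ.filter (fun a => d a = i), ∑ c ∈ Finset.univ.filter (fun c => d c = j),
        ⁅bE a, bE c⁆ ⊗ₜ[K] (du a * Q * du c)
      = (if i + j = 0 then (1 : K) else 0) •
          ((∑ c ∈ Finset.univ.filter (fun c => d c = 0),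
              (LinearMap.trace K V (du c * Q)) • bE c) ⊗ₜ[K] P (k + j))
        - (Module.finrank K ↥(LinearMap.range Q) : K) •
          ∑ c ∈ Finset.univ.filter (fun c => d c = i + j), bE c ⊗ₜ[K] (du c * P (k + j)) := by
  have : Module.Finite K V := .of_basis v
  have trace_Q : trace K V Q = Module.finrank K (LinearMap.range Q) :=
    (LinearMap.IsIdempotentElem.isProj_range Q hQidem).trace
  calc _ = ∑ b, bE b ⊗ₜ[K] ∑ a ∈ univ.filter (fun a => d a = i),
        ∑ c ∈ univ.filter (fun c => d c = j),
          trace K V (⁅bE a, bE c⁆ * du b) • (du a * Q * du c) :=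
        IsTraceDual.sum_sum_tmul_eq bE hdual _ _ _ _
    _ = ∑ b, bE b ⊗ₜ[K] (if d b = i + j then
          (if i + j = 0 then trace K V (du b * Q) • P (k + j) else 0) else 0)
        - ∑ b, bE b ⊗ₜ[K] (if d b = i + j then trace K V Q • (du b * P (k + j)) else 0) := by
        rw [← sum_sub_distrib]
        refine sum_congr rfl fun b _ => ?_
        simp only [Ring.lie_def, sub_mul, map_sub, sub_smul, sum_sub_distrib,
          TensorProduct.tmul_sub]
        rw [sum_sum_trace_mul_mul_smul_of_isTraceDual v wt bE hH hP hdual hbdeg hdudeg hQ1 hQ2,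
          sum_sum_trace_mul_mul_smul_swap_of_isTraceDual v wt bE hH hP hdual hbdeg hdudeg hQ1 hQ2]
    _ = _ := by
        congr 1
        · by_cases hij : i + j = 0
          · simp only [hij, if_true, one_smul, TensorProduct.sum_tmul, sum_filter]
            exact sum_congr rfl fun b _ => by split_ifs <;> simp [TensorProduct.smul_tmul]
          · simp [hij]
        · rw [trace_Q, smul_sum, sum_filter]
          exact sum_congr rfl fun b _ => by split_ifs <;> simp [TensorProduct.tmul_smul]

/-- with `g = gl(V)` graded by `ad H`-eigenvalues, `V = ⊕ V[ℓ]` the graded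
module with projections `P ℓ`, basis `{bE i}` of `End V` with trace-dual `{du i}` and
degrees `d i`, `E_j = ∑_{i : d i = j} bE i ⊗ du i`, and `Q = 1_U` the projection onto a
subspace `U ⊆ V[k]` along a graded complement, one has
`[E_i, 1_U E_j]¹ = δ_{i+j,0} tr(E₀ 1_U) 1_{V[k+j]} − dim(U) E_{i+j} 1_{V[k+j]}`. -/
theorem stmt9 {K : Type*} [Field K] [CharZero K] [DecidableEq K]
    {V : Type*} [AddCommGroup V] [Module K V]
    {J : Type*} [Fintype J] [DecidableEq J] (v : Module.Basis J K V) (wt : J → K)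
    (H : Module.End K V) (hH : ∀ x, H (v x) = wt x • v x)
    (P : K → Module.End K V)
    (hP : ∀ (c : K) (x : J), P c (v x) = if wt x = c then v x else 0)
    {I : Type*} [Fintype I] [DecidableEq I]
    (bE : Module.Basis I K (Module.End K V)) (du : I → Module.End K V)
    (hdual : ∀ a c, LinearMap.trace K V (bE a * du c) = if a = c then 1 else 0)
    (d : I → K)
    (hbdeg : ∀ a, ⁅H, bE a⁆ = d a • bE a)
    (hdudeg : ∀ a, ⁅H, du a⁆ = (-(d a)) • du a)
    (k : K) (Q : Module.End K V)
    (hQidem : Q * Q = Q) (hQ1 : P k * Q = Q) (hQ2 : Q * P k = Q)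
    (i j : K) :
    ∑ a ∈ Finset.univ.filter (fun a => d a = i), ∑ c ∈ Finset.univ.filter (fun c => d c = j),
        ⁅bE a, bE c⁆ ⊗ₜ[K] (du a * Q * du c)
      = (if i + j = 0 then (1 : K) else 0) •
          ((∑ c ∈ Finset.univ.filter (fun c => d c = 0),
              (LinearMap.trace K V (du c * Q)) • bE c) ⊗ₜ[K] P (k + j))
        - (Module.finrank K ↥(LinearMap.range Q) : K) •
          ∑ c ∈ Finset.univ.filter (fun c => d c = i + j), bE c ⊗ₜ[K] (du c * P (k + j)) :=
  stmt9_general v wt H hH P hP bE du hdual d hbdeg hdudeg k Q hQidem hQ1 hQ2 i j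
end

section
/- Let F be a nilpotent endomorphism of V acting as the left shift in a fixed Jordan basis, F^t the right shift, V_+ = ker F^t, V_− = ker F. For every k ≥ 1 the following identity holds in End(V): (1 − 1_{V_+ ∩ (F^t)^{k−1} V_−}) 1_{V_+} (F^t)^{k−1} = 1_{V_+} (F^t)^k F. -/
namespace PyramidBox

variable {s : ℕ} {p r : Fin s → ℕ}

def rowEnd (x : PyramidBox p r) : PyramidBox p r := ⟨x.1, x.2.1, ⟨0, x.2.2.pos⟩⟩

theorem rowEnd_eq_self {x : PyramidBox p r} (h : (x.2.2 : ℕ) = 0) : x.rowEnd = x := by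
  obtain ⟨i, q, j, hj⟩ := x
  simp only at h
  subst h
  rfl

end PyramidBox

open PyramidBox

theorem proj_mul_shiftRight_pow_apply {K V : Type*} [Semiring K] [AddCommMonoid V] [Module K V]
    {s : ℕ} {p r : Fin s → ℕ} (b : Module.Basis (PyramidBox p r) K V) {Ft Pplus : Module.End K V}
    (hFt : ∀ x : PyramidBox p r,
      Ft (b x) = if 0 < (x.2.2 : ℕ)
        then b ⟨x.1, x.2.1, ⟨(x.2.2 : ℕ) - 1, Nat.lt_of_le_of_lt (Nat.sub_le _ _) x.2.2.isLt⟩⟩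
        else 0)
    (hPplus : ∀ x : PyramidBox p r, Pplus (b x) = if (x.2.2 : ℕ) = 0 then b x else 0)
    (m : ℕ) (x : PyramidBox p r) :
    (Pplus * Ft ^ m) (b x) = if (x.2.2 : ℕ) = m then b x.rowEnd else 0 := by
  induction m generalizing x with
  | zero =>
    rw [pow_zero, mul_one, hPplus]
    split_ifs with h
    · rw [rowEnd_eq_self h]
    · rfl
  | succ m ih =>
    rw [pow_succ, ← mul_assoc, Module.End.mul_apply, hFt]
    split_ifs with hpos hm hm
    · rw [ih, if_pos (by simp only; omega)]
      rfl
    · rw [ih, if_neg (by simp only; omega)]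
    · omega
    · exact map_zero _

theorem stmt10_general {K : Type*} [Field K]
    {V : Type*} [AddCommGroup V] [Module K V]
    {s : ℕ} (p r : Fin s → ℕ)
    (b : Module.Basis (PyramidBox p r) K V)
    (F Ft Pplus : Module.End K V) (Qplus : ℕ → Module.End K V)
    (hF : ∀ x : PyramidBox p r,
      F (b x) = if h : (x.2.2 : ℕ) + 1 < p x.1
        then b ⟨x.1, x.2.1, ⟨(x.2.2 : ℕ) + 1, h⟩⟩ else 0)
    (hFt : ∀ x : PyramidBox p r,
      Ft (b x) = if 0 < (x.2.2 : ℕ)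
        then b ⟨x.1, x.2.1, ⟨(x.2.2 : ℕ) - 1, Nat.lt_of_le_of_lt (Nat.sub_le _ _) x.2.2.isLt⟩⟩
        else 0)
    (hPplus : ∀ x : PyramidBox p r, Pplus (b x) = if (x.2.2 : ℕ) = 0 then b x else 0)
    (hQplus : ∀ (n : ℕ) (x : PyramidBox p r),
      Qplus n (b x) = if ((x.2.2 : ℕ) = 0 ∧ p x.1 = n + 1) then b x else 0)
    (k : ℕ) (hk : 1 ≤ k) :
    (1 - Qplus (k - 1)) * Pplus * Ft ^ (k - 1) = Pplus * Ft ^ k * F := by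
  obtain ⟨m, rfl⟩ : ∃ m, k = m + 1 := ⟨k - 1, by omega⟩
  have hPFt := proj_mul_shiftRight_pow_apply b hFt hPplus
  refine b.ext fun x => ?_
  rw [Nat.add_sub_cancel, mul_assoc, Module.End.mul_apply, hPFt, Module.End.mul_apply, hF]
  have hlt : (x.2.2 : ℕ) < p x.1 := x.2.2.isLt
  by_cases hxm : (x.2.2 : ℕ) = m
  · rw [if_pos hxm, LinearMap.sub_apply, Module.End.one_apply, hQplus]
    by_cases hrow : (x.2.2 : ℕ) + 1 < p x.1
    · rw [if_neg (by simp only [rowEnd, true_and]; omega), dif_pos hrow, hPFt,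
        if_pos (by simp only; omega), sub_zero]
      rfl
    · rw [if_pos (by simp only [rowEnd, true_and]; omega), dif_neg hrow, map_zero, sub_self]
  · rw [if_neg hxm, map_zero]
    split_ifs
    · rw [hPFt, if_neg (by simpa using hxm)]
    · exact (map_zero _).symm

/-- with `F` the left shift of a pyramid, `Fᵗ` the right shift,
`Pplus = 1_{V₊}` the projection onto `V₊ = ker Fᵗ` and `Qplus h = 1_{V₊ ∩ (Fᵗ)^h V₋}` the
projection onto rightmost boxes of rows of length `h+1`, for every `k ≥ 1` one has
`(1 − 1_{V₊ ∩ (Fᵗ)^{k−1} V₋}) 1_{V₊} (Fᵗ)^{k−1} = 1_{V₊} (Fᵗ)^k F` in `End(V)`. -/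
theorem stmt10 {K : Type*} [Field K] [CharZero K]
    {V : Type*} [AddCommGroup V] [Module K V]
    {s : ℕ} (p r : Fin s → ℕ)
    (b : Module.Basis (PyramidBox p r) K V)
    (F Ft Pplus : Module.End K V) (Qplus : ℕ → Module.End K V)
    (hF : ∀ x : PyramidBox p r,
      F (b x) = if h : (x.2.2 : ℕ) + 1 < p x.1
        then b ⟨x.1, x.2.1, ⟨(x.2.2 : ℕ) + 1, h⟩⟩ else 0)
    (hFt : ∀ x : PyramidBox p r,
      Ft (b x) = if 0 < (x.2.2 : ℕ)
        then b ⟨x.1, x.2.1, ⟨(x.2.2 : ℕ) - 1, Nat.lt_of_le_of_lt (Nat.sub_le _ _) x.2.2.isLt⟩⟩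
        else 0)
    (hPplus : ∀ x : PyramidBox p r, Pplus (b x) = if (x.2.2 : ℕ) = 0 then b x else 0)
    (hQplus : ∀ (n : ℕ) (x : PyramidBox p r),
      Qplus n (b x) = if ((x.2.2 : ℕ) = 0 ∧ p x.1 = n + 1) then b x else 0)
    (k : ℕ) (hk : 1 ≤ k) :
    (1 - Qplus (k - 1)) * Pplus * Ft ^ (k - 1) = Pplus * Ft ^ k * F :=
  stmt10_general p r b F Ft Pplus Qplus hF hFt hPplus hQplus k hk
end

section
/- Let g be a Lie algebra with two gradings Γ_1, Γ_2 (by ad-semisimple elements), each giving rise to a Kazhdan filtration F^{Γ}_Δ U(g) = ∑_{s − j_1 − ⋯ − j_s ≤ Δ} g^{Γ}[j_1]⋯g^{Γ}[j_s] of U(g), and let G = Γ_1 − Γ_2 be the grading of U(g) by the difference of the two gradings. Then for all k, Δ one has F^{Γ_1}_Δ U(g)^G[k] = F^{Γ_2}_{Δ+k} U(g)^G[k], where U(g)^G[k] is the degree-k component of U(g) with respect to G. -/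
attribute [local instance 100] LieRing.ofAssociativeRing

/-- The Kazhdan filtration of `U(g)` attached to a grading `g = ⊕_j g[j]`:
`F_Δ U(g) = ∑_{s - j₁ - ⋯ - j_s ≤ Δ} g[j₁] ⋯ g[j_s]`. -/
noncomputable def kazhdanFil {K : Type*} [Field K] {L : Type*} [LieRing L] [LieAlgebra K L]
    (g : ℚ → Submodule K L) (Δ : ℚ) :
    Submodule K (UniversalEnvelopingAlgebra K L) :=
  ⨆ (s : ℕ), ⨆ (j : Fin s → ℚ), ⨆ (_ : (s : ℚ) - ∑ t, j t ≤ Δ),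
    (List.ofFn (fun t =>
      Submodule.map (UniversalEnvelopingAlgebra.ι K).toLinearMap (g (j t)))).prod

/-- The degree-`k` piece of the difference grading `G = Γ₁ - Γ₂` of `g`:
`g^G[k] = ⊕_{k₁ - k₂ = k} (g^{Γ₁}[k₁] ∩ g^{Γ₂}[k₂])`. -/
noncomputable def diffGrading {K : Type*} [Field K] {L : Type*} [LieRing L] [LieAlgebra K L]
    (g₁ g₂ : ℚ → Submodule K L) (k : ℚ) : Submodule K L :=
  ⨆ (q : ℚ × ℚ), ⨆ (_ : q.1 - q.2 = k), (g₁ q.1 ⊓ g₂ q.2)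

/-- The degree-`k` piece `U(g)^G[k]` of the multiplicative extension to `U(g)` of the
difference grading `G = Γ₁ - Γ₂`. -/
noncomputable def envDiffGraded {K : Type*} [Field K] {L : Type*} [LieRing L] [LieAlgebra K L]
    (g₁ g₂ : ℚ → Submodule K L) (k : ℚ) :
    Submodule K (UniversalEnvelopingAlgebra K L) :=
  ⨆ (s : ℕ), ⨆ (j : Fin s → ℚ), ⨆ (_ : ∑ t, j t = k),
    (List.ofFn (fun t =>
      Submodule.map (UniversalEnvelopingAlgebra.ι K).toLinearMap
        (diffGrading g₁ g₂ (j t)))).prod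

/-!
The difference of the Euler operators of `Γ₁` and `Γ₂` is a derivation of `g`; through a lift to
dual numbers it extends to a derivation of `U(g)` whose `k`-eigenspace contains `U(g)^G[k]`.
By compatibility of the gradings, `F^{Γ₁}_Δ` is spanned by products of bihomogeneous elements, so it
is the sum over `k` of the pieces of `Γ₁`-Kazhdan degree `≤ Δ` and `G`-degree `k`, and such a piece
has `Γ₂`-Kazhdan degree `≤ Δ + k`. As eigenspaces are independent, an element of
`F^{Γ₁}_Δ ∩ U(g)^G[k]` lies in the piece of `G`-degree `k`, hence in `F^{Γ₂}_{Δ+k}`. Exchanging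
`Γ₁` and `Γ₂` replaces `G` by `-G` and gives the reverse inclusion.
-/

open UniversalEnvelopingAlgebra

namespace Submodule

variable {R A : Type*} [CommSemiring R] [Semiring A] [Algebra R A]

theorem list_prod_ofFn_mono {s : ℕ} {P Q : Fin s → Submodule R A} (h : ∀ t, P t ≤ Q t) :
    (List.ofFn P).prod ≤ (List.ofFn Q).prod :=
  List.Forall₂.prod_le_prod' (by simpa [List.forall₂_iff_get] using fun i hi => h ⟨i, hi⟩)

theorem list_prod_ofFn_iSup_le {ι : Type*} :
    ∀ {s : ℕ} (Q : Fin s → ι → Submodule R A),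
      (List.ofFn fun t => ⨆ i, Q t i).prod ≤ ⨆ i : Fin s → ι, (List.ofFn fun t => Q t (i t)).prod
  | 0, _ => le_iSup_of_le Fin.elim0 le_rfl
  | s + 1, Q => by
    simp only [List.ofFn_succ, List.prod_cons]
    refine (mul_le_mul' le_rfl (list_prod_ofFn_iSup_le fun t => Q t.succ)).trans ?_
    simp only [iSup_mul, mul_iSup, iSup_le_iff]
    exact fun i i₀ => le_iSup_of_le (Fin.cons i₀ i) (by simp)

theorem list_prod_ofFn_le_of_gradedMonoid {ι : Type*} [AddCommMonoid ι] (𝒜 : ι → Submodule R A)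
    [SetLike.GradedMonoid 𝒜] :
    ∀ {s : ℕ} (i : Fin s → ι) {P : Fin s → Submodule R A}, (∀ t, P t ≤ 𝒜 (i t)) →
      (List.ofFn P).prod ≤ 𝒜 (∑ t, i t)
  | 0, _, _, _ => by simpa using one_le.mpr SetLike.GradedOne.one_mem
  | s + 1, i, P, h => by
    rw [List.ofFn_succ, List.prod_cons, Fin.sum_univ_succ]
    refine (mul_le_mul' (h 0) (list_prod_ofFn_le_of_gradedMonoid 𝒜 _ fun t => h t.succ)).trans ?_
    exact mul_le.mpr fun a ha b hb => SetLike.mul_mem_graded ha hb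

end Submodule

theorem Module.End.gradedMonoid_eigenspace_of_leibniz {K A : Type*} [CommRing K] [Ring A]
    [Algebra K A] {f : Module.End K A} (hf : ∀ a b, f (a * b) = f a * b + a * f b) :
    SetLike.GradedMonoid fun μ : K => f.eigenspace μ where
  one_mem := by
    have h := hf 1 1
    simp only [mul_one, one_mul, left_eq_add] at h
    simp [h]
  mul_mem μ ν a b ha hb := by
    rw [Module.End.mem_eigenspace_iff] at *
    rw [hf, ha, hb, smul_mul_assoc, mul_smul_comm, add_smul]

theorem iSupIndep.mem_of_mem_iSup_of_le {ι R M : Type*} [Ring R] [AddCommGroup M] [Module R M]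
    {E S : ι → Submodule R M} (hE : iSupIndep E) (hSE : ∀ i, S i ≤ E i) {k : ι} {x : M}
    (hx : x ∈ ⨆ i, S i) (hxk : x ∈ E k) : x ∈ S k := by
  rw [iSup_split_single _ k, Submodule.mem_sup] at hx
  obtain ⟨y, hy, z, hz, rfl⟩ := hx
  have hz_rest : z ∈ ⨆ (i) (_ : i ≠ k), E i :=
    iSup₂_mono (fun i _ => hSE i) hz
  have hz_k : z ∈ E k := by simpa using sub_mem hxk (hSE k hy)
  rwa [Submodule.disjoint_def.mp (hE k) z hz_k hz_rest, add_zero]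

theorem DirectSum.IsInternal.induction_on {ι R M : Type*} [DecidableEq ι] [Ring R]
    [AddCommGroup M] [Module R M] {g : ι → Submodule R M} (h : DirectSum.IsInternal g)
    {motive : M → Prop} (x : M) (mem : ∀ i, ∀ x ∈ g i, motive x) (zero : motive 0)
    (add : ∀ x y, motive x → motive y → motive (x + y)) : motive x :=
  Submodule.iSup_induction g (x := x) (by rw [h.submodule_iSup_eq_top]; trivial) mem zero add

section Gradings

variable {K : Type*} [Field K] {L : Type*} [LieRing L] [LieAlgebra K L]

noncomputable def gradingEnd (g : ℚ → Submodule K L) (h : DirectSum.IsInternal g) :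
    Module.End K L :=
  DirectSum.toModule K ℚ L (fun j => (j : K) • (g j).subtype) ∘ₗ
    (LinearEquiv.ofBijective (DirectSum.coeLinearMap g) h).symm.toLinearMap

theorem gradingEnd_apply_of_mem {g : ℚ → Submodule K L} (h : DirectSum.IsInternal g) {j : ℚ}
    {x : L} (hx : x ∈ g j) : gradingEnd g h x = (j : K) • x := by
  have hx' : (LinearEquiv.ofBijective (DirectSum.coeLinearMap g) h).symm x
      = DirectSum.lof K ℚ (fun i => g i) j ⟨x, hx⟩ := by
    rw [LinearEquiv.symm_apply_eq]
    exact (DirectSum.coeLinearMap_of g j ⟨x, hx⟩).symm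
  rw [gradingEnd, LinearMap.comp_apply, LinearEquiv.coe_toLinearMap, hx', DirectSum.toModule_lof]
  rfl

noncomputable def gradingDerivation [CharZero K] (g : ℚ → Submodule K L)
    (h : DirectSum.IsInternal g) (hbr : ∀ i j, ∀ x ∈ g i, ∀ y ∈ g j, ⁅x, y⁆ ∈ g (i + j)) :
    LieDerivation K L L where
  toLinearMap := gradingEnd g h
  leibniz' x y := by
    induction x using h.induction_on with
    | zero => simp
    | add x₁ x₂ hx₁ hx₂ => simp only [add_lie, lie_add, map_add, hx₁, hx₂]; abel
    | mem i x hx =>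
      induction y using h.induction_on with
      | zero => simp
      | add y₁ y₂ hy₁ hy₂ => simp only [add_lie, lie_add, map_add, hy₁, hy₂]; abel
      | mem j y hy =>
        rw [gradingEnd_apply_of_mem h hx, gradingEnd_apply_of_mem h hy,
          gradingEnd_apply_of_mem h (hbr i j x hx y hy), lie_smul, lie_smul, ← lie_skew y x,
          smul_neg, sub_neg_eq_add, Rat.cast_add, add_smul, add_comm]

theorem gradingDerivation_apply_of_mem [CharZero K] {g : ℚ → Submodule K L}
    (h : DirectSum.IsInternal g)
    (hbr : ∀ i j, ∀ x ∈ g i, ∀ y ∈ g j, ⁅x, y⁆ ∈ g (i + j)) {j : ℚ} {x : L} (hx : x ∈ g j) :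
    gradingDerivation g h hbr x = (j : K) • x :=
  gradingEnd_apply_of_mem h hx

end Gradings

namespace LieDerivation

variable {K : Type*} [CommRing K] {L : Type*} [LieRing L] [LieAlgebra K L]

local notation "𝒰" => UniversalEnvelopingAlgebra K L

/-- The `ε`-component of the lift of `x ↦ ι x + ε ι (D x)` to `U(g)` is the extension of `D`. -/
@[simps]
def toDualNumberLieHom (D : LieDerivation K L L) : L →ₗ⁅K⁆ DualNumber 𝒰 where
  toFun x := TrivSqZeroExt.inl (ι K x) + TrivSqZeroExt.inr (ι K (D x))
  map_add' x y := by ext <;> simp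
  map_smul' c x := by ext <;> simp
  map_lie' {x y} := by
    ext <;> simp only [apply_lie_eq_sub, map_sub, LieHom.map_lie] <;>
      simp [-ι_apply, LieRing.of_associative_ring_bracket]
    abel

theorem fst_lift_toDualNumberLieHom (D : LieDerivation K L L) (u : 𝒰) :
    (lift K D.toDualNumberLieHom u).fst = u := by
  have h : (TrivSqZeroExt.fstHom K 𝒰 𝒰).comp (lift K D.toDualNumberLieHom) = AlgHom.id K 𝒰 := by
    ext x
    simp
  exact DFunLike.congr_fun h u

def envelopingEnd (D : LieDerivation K L L) : Module.End K 𝒰 :=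
  (TrivSqZeroExt.sndHom 𝒰 𝒰).restrictScalars K ∘ₗ (lift K D.toDualNumberLieHom).toLinearMap

theorem envelopingEnd_ι (D : LieDerivation K L L) (x : L) :
    D.envelopingEnd (ι K x) = ι K (D x) := by
  change (lift K D.toDualNumberLieHom (ι K x)).snd = _
  simp

theorem envelopingEnd_mul (D : LieDerivation K L L) (u v : 𝒰) :
    D.envelopingEnd (u * v) = D.envelopingEnd u * v + u * D.envelopingEnd v := by
  change (lift K D.toDualNumberLieHom (u * v)).snd = _
  rw [map_mul, TrivSqZeroExt.snd_mul, fst_lift_toDualNumberLieHom, fst_lift_toDualNumberLieHom,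
    smul_eq_mul, op_smul_eq_mul, add_comm]
  rfl

end LieDerivation

section DifferenceGrading

variable {K : Type*} [Field K] {L : Type*} [LieRing L] [LieAlgebra K L]

theorem diffGrading_le_eigenspace [CharZero K] {g₁ g₂ : ℚ → Submodule K L}
    (h₁ : DirectSum.IsInternal g₁) (h₂ : DirectSum.IsInternal g₂)
    (hbr₁ : ∀ i j, ∀ x ∈ g₁ i, ∀ y ∈ g₁ j, ⁅x, y⁆ ∈ g₁ (i + j))
    (hbr₂ : ∀ i j, ∀ x ∈ g₂ i, ∀ y ∈ g₂ j, ⁅x, y⁆ ∈ g₂ (i + j)) (j : ℚ) :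
    diffGrading g₁ g₂ j ≤ Module.End.eigenspace
      ((gradingDerivation g₁ h₁ hbr₁ - gradingDerivation g₂ h₂ hbr₂ : LieDerivation K L L) :
        Module.End K L) (j : K) := by
  refine iSup₂_le fun q hq x hx => ?_
  rw [Module.End.mem_eigenspace_iff, LieDerivation.coeFn_coe, LieDerivation.sub_apply,
    gradingDerivation_apply_of_mem h₁ hbr₁ hx.1, gradingDerivation_apply_of_mem h₂ hbr₂ hx.2,
    ← sub_smul, ← Rat.cast_sub, hq]

theorem envDiffGraded_le_eigenspace [CharZero K] {g₁ g₂ : ℚ → Submodule K L}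
    (D : LieDerivation K L L)
    (hD : ∀ j : ℚ, diffGrading g₁ g₂ j ≤ Module.End.eigenspace (D : Module.End K L) (j : K))
    (k : ℚ) : envDiffGraded g₁ g₂ k ≤ D.envelopingEnd.eigenspace (k : K) := by
  have := Module.End.gradedMonoid_eigenspace_of_leibniz D.envelopingEnd_mul
  refine iSup₂_le fun s j => iSup_le fun hj => ?_
  rw [← hj, Rat.cast_sum]
  refine Submodule.list_prod_ofFn_le_of_gradedMonoid _ _ fun t => ?_
  rintro _ ⟨x, hx, rfl⟩
  have hDx := Module.End.mem_eigenspace_iff.mp (hD (j t) hx)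
  rw [LieDerivation.coeFn_coe] at hDx
  rw [Module.End.mem_eigenspace_iff, LieHom.coe_toLinearMap, D.envelopingEnd_ι, hDx, map_smul]

theorem diffGrading_le_swap (g₁ g₂ : ℚ → Submodule K L) (j : ℚ) :
    diffGrading g₁ g₂ j ≤ diffGrading g₂ g₁ (-j) :=
  iSup₂_le fun q hq =>
    le_iSup₂_of_le q.swap (by simp [← hq]) (inf_comm (g₁ q.1) (g₂ q.2)).le

theorem envDiffGraded_le_swap (g₁ g₂ : ℚ → Submodule K L) (k : ℚ) :
    envDiffGraded g₁ g₂ k ≤ envDiffGraded g₂ g₁ (-k) :=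
  iSup₂_le fun s j => iSup_le fun hj =>
    le_iSup₂_of_le s (-j) <| le_iSup_of_le (by simp [hj]) <|
      Submodule.list_prod_ofFn_mono fun t => Submodule.map_mono (diffGrading_le_swap g₁ g₂ (j t))

end DifferenceGrading

section KazhdanPieces

variable {K : Type*} [Field K] {L : Type*} [LieRing L] [LieAlgebra K L]

noncomputable def kazhdanDiffPiece (g₁ g₂ : ℚ → Submodule K L) (Δ k : ℚ) :
    Submodule K (UniversalEnvelopingAlgebra K L) :=
  ⨆ (s : ℕ) (a : Fin s → ℚ) (b : Fin s → ℚ) (_ : (s : ℚ) - ∑ t, a t ≤ Δ ∧ ∑ t, a t - ∑ t, b t = k),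
    (List.ofFn fun t => Submodule.map (ι K).toLinearMap (g₁ (a t) ⊓ g₂ (b t))).prod

theorem kazhdanDiffPiece_le_envDiffGraded (g₁ g₂ : ℚ → Submodule K L) (Δ k : ℚ) :
    kazhdanDiffPiece g₁ g₂ Δ k ≤ envDiffGraded g₁ g₂ k := by
  refine iSup₂_le fun s a => iSup₂_le fun b hab => ?_
  have hdiff : ∀ t, g₁ (a t) ⊓ g₂ (b t) ≤ diffGrading g₁ g₂ (a t - b t) := fun t =>
    le_iSup₂_of_le (a t, b t) rfl le_rfl
  refine le_iSup₂_of_le s (fun t => a t - b t) <| le_iSup_of_le ?_ <|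
    Submodule.list_prod_ofFn_mono fun t => Submodule.map_mono (hdiff t)
  rw [Finset.sum_sub_distrib, hab.2]

theorem kazhdanDiffPiece_le_kazhdanFil (g₁ g₂ : ℚ → Submodule K L) (Δ k : ℚ) :
    kazhdanDiffPiece g₁ g₂ Δ k ≤ kazhdanFil g₂ (Δ + k) :=
  iSup₂_le fun s a => iSup₂_le fun b hab =>
    le_iSup₂_of_le s b <| le_iSup_of_le (by linarith [hab.1, hab.2]) <|
      Submodule.list_prod_ofFn_mono fun t => Submodule.map_mono inf_le_right

theorem kazhdanFil_le_iSup_kazhdanDiffPiece {g₁ g₂ : ℚ → Submodule K L}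
    (hcompat₁ : ∀ k₁ : ℚ, (⨆ k₂ : ℚ, (g₁ k₁ ⊓ g₂ k₂)) = g₁ k₁) (Δ : ℚ) :
    kazhdanFil g₁ Δ ≤ ⨆ k, kazhdanDiffPiece g₁ g₂ Δ k := by
  refine iSup₂_le fun s a => iSup_le fun ha => ?_
  have hsplit : ∀ t, Submodule.map (ι K).toLinearMap (g₁ (a t))
      = ⨆ b, Submodule.map (ι K).toLinearMap (g₁ (a t) ⊓ g₂ b) := fun t => by
    rw [← Submodule.map_iSup, hcompat₁]
  simp_rw [hsplit]
  refine (Submodule.list_prod_ofFn_iSup_le _).trans (iSup_le fun b => ?_)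
  exact le_iSup_of_le (∑ t, a t - ∑ t, b t) (le_iSup₂_of_le s a (le_iSup₂_of_le b ⟨ha, rfl⟩ le_rfl))

theorem kazhdanFil_inf_envDiffGraded_le [CharZero K] {g₁ g₂ : ℚ → Submodule K L}
    (h₁ : DirectSum.IsInternal g₁) (h₂ : DirectSum.IsInternal g₂)
    (hbr₁ : ∀ i j, ∀ x ∈ g₁ i, ∀ y ∈ g₁ j, ⁅x, y⁆ ∈ g₁ (i + j))
    (hbr₂ : ∀ i j, ∀ x ∈ g₂ i, ∀ y ∈ g₂ j, ⁅x, y⁆ ∈ g₂ (i + j))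
    (hcompat₁ : ∀ k₁ : ℚ, (⨆ k₂ : ℚ, (g₁ k₁ ⊓ g₂ k₂)) = g₁ k₁) (Δ k : ℚ) :
    kazhdanFil g₁ Δ ⊓ envDiffGraded g₁ g₂ k ≤ kazhdanFil g₂ (Δ + k) := by
  set D := gradingDerivation g₁ h₁ hbr₁ - gradingDerivation g₂ h₂ hbr₂
  have henv := envDiffGraded_le_eigenspace D (diffGrading_le_eigenspace h₁ h₂ hbr₁ hbr₂)
  have hindep : iSupIndep fun k : ℚ => D.envelopingEnd.eigenspace (k : K) :=
    D.envelopingEnd.eigenspaces_iSupIndep.comp Rat.cast_injective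
  rintro x ⟨hxF, hxG⟩
  refine kazhdanDiffPiece_le_kazhdanFil g₁ g₂ Δ k (hindep.mem_of_mem_iSup_of_le ?_ ?_ (henv k hxG))
  · exact fun k' => (kazhdanDiffPiece_le_envDiffGraded g₁ g₂ Δ k').trans (henv k')
  · exact kazhdanFil_le_iSup_kazhdanDiffPiece hcompat₁ Δ hxF

end KazhdanPieces

/-- for two gradings `Γ₁, Γ₂` of `g` (by eigenvalues of commuting semisimple
derivations), with `G = Γ₁ - Γ₂` the difference grading of `U(g)`, one has
`F^{Γ₁}_Δ U(g)^G[k] = F^{Γ₂}_{Δ+k} U(g)^G[k]` for all `k, Δ`. -/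
theorem stmt12 {K : Type*} [Field K] [CharZero K]
    {L : Type*} [LieRing L] [LieAlgebra K L]
    (g₁ g₂ : ℚ → Submodule K L)
    (h₁ : DirectSum.IsInternal g₁) (h₂ : DirectSum.IsInternal g₂)
    (hbr₁ : ∀ i j, ∀ x ∈ g₁ i, ∀ y ∈ g₁ j, ⁅x, y⁆ ∈ g₁ (i + j))
    (hbr₂ : ∀ i j, ∀ x ∈ g₂ i, ∀ y ∈ g₂ j, ⁅x, y⁆ ∈ g₂ (i + j))
    (hcompat₁ : ∀ k₁ : ℚ, (⨆ k₂ : ℚ, (g₁ k₁ ⊓ g₂ k₂)) = g₁ k₁)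
    (hcompat₂ : ∀ k₂ : ℚ, (⨆ k₁ : ℚ, (g₁ k₁ ⊓ g₂ k₂)) = g₂ k₂)
    (k Δ : ℚ) :
    kazhdanFil g₁ Δ ⊓ envDiffGraded g₁ g₂ k
      = kazhdanFil g₂ (Δ + k) ⊓ envDiffGraded g₁ g₂ k := by
  refine le_antisymm
    (le_inf (kazhdanFil_inf_envDiffGraded_le h₁ h₂ hbr₁ hbr₂ hcompat₁ Δ k) inf_le_right)
    (le_inf ?_ inf_le_right)
  have hcompat₂_swap : ∀ k₂ : ℚ, (⨆ k₁ : ℚ, (g₂ k₂ ⊓ g₁ k₁)) = g₂ k₂ := by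
    simpa only [inf_comm] using hcompat₂
  calc kazhdanFil g₂ (Δ + k) ⊓ envDiffGraded g₁ g₂ k
      ≤ kazhdanFil g₂ (Δ + k) ⊓ envDiffGraded g₂ g₁ (-k) :=
        inf_le_inf_left _ (envDiffGraded_le_swap g₁ g₂ k)
    _ ≤ kazhdanFil g₁ (Δ + k + -k) :=
        kazhdanFil_inf_envDiffGraded_le h₂ h₁ hbr₂ hbr₁ hcompat₂_swap (Δ + k) (-k)
    _ = kazhdanFil g₁ Δ := by rw [add_neg_cancel_right]
end

section
/- Let g, g′, f, f′, η^f, η^{f′} be as in the previous statement, and let h ⊂ g be a subspace such that [U′^⊥, h] = 0 (bracket in g). Then for every v ∈ S(g′) and h ∈ h, one has η^f([v, h]) = η^f([η^{f′}(v), h]), where [·, h] denotes the derivation of the symmetric algebra extending ad(−h) applied componentwise. -/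
/-! On `S(g')` one has `η^f ∘ η^{f'} = η^f`: on a generator `a ∈ g'`, `η^{f'}` replaces `a` by
`π' a`, which differs from `a` by an element of `U'^⊥ ⊆ ker π^f`, plus a constant that
`η^f` accounts for. Hence `v ↦ η^f [η^{f'} v, y]` satisfies the same twisted Leibniz rule as
`v ↦ η^f [v, y]`, and the two agree on generators because constants are killed by `[·, y]` and
`[U'^⊥, 𝔥] = 0`. -/

namespace Derivation

variable {K A C : Type*} [CommRing K] [CommRing A] [Algebra K A] [CommRing C] [Algebra K C]

theorem comp_algHom_eqOn_adjoin (D : Derivation K A A) (ψ : A →ₐ[K] A) (θ : A →ₐ[K] C)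
    {s : Set A} (hθψ : Set.EqOn (θ.comp ψ) θ (Algebra.adjoin K s))
    (hs : Set.EqOn (θ ∘ D ∘ ψ) (θ ∘ D) s) :
    Set.EqOn (θ ∘ D ∘ ψ) (θ ∘ D) (Algebra.adjoin K s) := by
  intro x hx
  induction hx using Algebra.adjoin_induction with
  | mem x hx => exact hs hx
  | algebraMap r => simp
  | add x z _ _ ihx ihz =>
    simp only [Function.comp_apply, map_add] at ihx ihz ⊢
    rw [ihx, ihz]
  | mul x z hx hz ihx ihz =>
    have hθψx : θ (ψ x) = θ x := hθψ hx
    have hθψz : θ (ψ z) = θ z := hθψ hz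
    simp only [Function.comp_apply, map_mul, leibniz, smul_eq_mul, map_add] at ihx ihz ⊢
    rw [ihx, ihz, hθψx, hθψz]

end Derivation

/-- in the setting of Statement 14 (with `g` now a Lie algebra and `B` playing
the role of `S(g)`), let `𝔥 ⊆ g` be a subspace with `⁅U'^⊥, 𝔥⁆ = 0`, and for `y ∈ g` let
`D y` be the derivation of `B` extending `a ↦ ⁅a, y⁆` (i.e. `D y (j a) = j ⁅a, y⁆`).
Then for every `y ∈ 𝔥` and every `v ∈ S(g')` (the subalgebra generated by `j(g')`),
`η^f([v, y]) = η^f([η^{f'}(v), y])`, i.e. `η^f(D y v) = η^f(D y (η^{f'} v))`. -/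
theorem stmt15 {K : Type*} [Field K]
    {g : Type*} [LieRing g] [LieAlgebra K g]
    {B : Type*} [CommRing B] [Algebra K B]
    (g' : Submodule K g) (j : g →ₗ[K] B)
    (πf π' : g →ₗ[K] g) (φ φ' : g →ₗ[K] K)
    (U'perp : Submodule K g)
    (hU' : U'perp ≤ LinearMap.ker πf)
    (hπ'mem : ∀ a ∈ g', π' a ∈ g')
    (hπ' : ∀ a ∈ g', a - π' a ∈ U'perp)
    (hφ : ∀ a ∈ g', φ a = φ' a)
    (hφπ' : ∀ a ∈ g', φ' (π' a) = 0)
    (ηf ηf' : B →ₐ[K] B)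
    (hηf : ∀ a : g, ηf (j a) = j (πf a) + algebraMap K B (φ a))
    (hηf' : ∀ a ∈ g', ηf' (j a) = j (π' a) + algebraMap K B (φ' a))
    (𝔥 : Submodule K g)
    (hcomm : ∀ x ∈ U'perp, ∀ y ∈ 𝔥, ⁅x, y⁆ = 0)
    (D : g → Derivation K B B)
    (hD : ∀ (y : g) (a : g), D y (j a) = j ⁅a, y⁆) :
    ∀ y ∈ 𝔥, ∀ v ∈ Algebra.adjoin K (⇑j '' (g' : Set g)),
      ηf (D y v) = ηf (D y (ηf' v)) := by
  intro y hy v hv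
  have hηη : Set.EqOn (ηf.comp ηf') ηf (Algebra.adjoin K (⇑j '' (g' : Set g))) := by
    refine AlgHom.eqOn_adjoin_iff.mpr ?_
    rintro _ ⟨a, ha, rfl⟩
    have hπ : πf (π' a) = πf a := by
      have h := hU' (hπ' a ha)
      rw [LinearMap.mem_ker, map_sub, sub_eq_zero] at h
      exact h.symm
    simp only [AlgHom.comp_apply, hηf' a ha, map_add, hηf, hπ, AlgHom.commutes,
      hφ _ (hπ'mem a ha), hφπ' a ha, hφ a ha, map_zero, add_zero]
  refine (Derivation.comp_algHom_eqOn_adjoin (D y) ηf' ηf hηη ?_ hv).symm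
  rintro _ ⟨a, ha, rfl⟩
  have hbr : ⁅π' a, y⁆ = ⁅a, y⁆ := by
    have h := hcomm _ (hπ' a ha) y hy
    rw [sub_lie, sub_eq_zero] at h
    exact h.symm
  simp [hηf' a ha, hD, hbr]
end

section
/- Let F ∈ End(V) be the left-shift nilpotent of a pyramid with longest row p_1, F^t the right shift, V_± as above, and let Z′(x) = x 1_{V_+}(1 + x F^t)^{-1} 1_{V′_−} + ∑_i φ′_x(u′_i) U′^i be the polynomial matrix associated to the pyramid p′ obtained by deleting the leftmost column (a polynomial in x of degree ≤ p_1 − 1, whose non-leading terms in the relevant components have degree ≤ p_1 − 3). Then the residue X := Res_x x^{-1} 1_{V_−^u ∩ V′^d_−} (1 + x^{-1}F)^{-1} Z′_{geo}(x) (F′)^t 1_{V′^d_−} equals −1_{V_−^u ∩ V′^d_−}, where Z′_{geo}(x) = x 1_{V_+}(1+xF^t)^{-1} 1_{V″_−}. Concretely: (−1)^{p_1} Res_x x^{−p_1+2} · 1_{V_−^u ∩ V′^d_−} F^{p_1−2} 1_{V_+} (1 + x F^t)^{-1} 1_{V″_−} (F′)^t 1_{V′^d_−} = −1_{V_−^u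 ∩ V′^d_−}. -/
theorem Polynomial.coeff_C_mul_sum_neg_one_pow_smul_mul_C {K A : Type*} [CommRing K] [Ring A]
    [Algebra K A] (a c f : A) {n k : ℕ} (hk : k < n) :
    (C a * (∑ m ∈ Finset.range n, ((-1 : K) ^ m) • (C (f ^ m) * X ^ m)) * C c).coeff k =
      ((-1 : K) ^ k) • (a * f ^ k * c) := by
  simp only [coeff_mul_C, coeff_C_mul, finsetSum_coeff, coeff_smul, coeff_X_pow, mul_ite,
    mul_one, mul_zero, smul_ite, smul_zero, Finset.sum_ite_eq, Finset.mem_range, if_pos hk,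
    mul_smul_comm, smul_mul_assoc, mul_assoc]

namespace PyramidBox

variable {R V : Type*} [Semiring R] [AddCommMonoid V] [Module R V] {s : ℕ} {p r : Fin s → ℕ}
  (b : Module.Basis (PyramidBox p r) R V)

def IsLeftShift (F : Module.End R V) : Prop :=
  ∀ x : PyramidBox p r, F (b x) = if h : (x.2.2 : ℕ) + 1 < p x.1
    then b ⟨x.1, x.2.1, ⟨(x.2.2 : ℕ) + 1, h⟩⟩ else 0

def IsRightShift (Ft : Module.End R V) : Prop :=
  ∀ x : PyramidBox p r, Ft (b x) = if 0 < (x.2.2 : ℕ)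
    then b ⟨x.1, x.2.1, ⟨(x.2.2 : ℕ) - 1, Nat.lt_of_le_of_lt (Nat.sub_le _ _) x.2.2.isLt⟩⟩
    else 0

variable {b}

theorem IsLeftShift.pow_apply {F : Module.End R V} (hF : IsLeftShift b F) (n : ℕ)
    (x : PyramidBox p r) :
    (F ^ n) (b x) = if h : (x.2.2 : ℕ) + n < p x.1
      then b ⟨x.1, x.2.1, ⟨(x.2.2 : ℕ) + n, h⟩⟩ else 0 := by
  induction n with
  | zero => simp
  | succ n ih =>
    rw [pow_succ', Module.End.mul_apply, ih]
    by_cases hn : (x.2.2 : ℕ) + n < p x.1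
    · rw [dif_pos hn, hF]
      by_cases hn' : (x.2.2 : ℕ) + n + 1 < p x.1
      · rw [dif_pos hn', dif_pos (by omega)]; rfl
      · rw [dif_neg hn', dif_neg (by omega)]
    · rw [dif_neg hn, map_zero, dif_neg (by omega)]

theorem IsRightShift.pow_apply {Ft : Module.End R V} (hFt : IsRightShift b Ft) (m : ℕ)
    (x : PyramidBox p r) :
    (Ft ^ m) (b x) = if m ≤ (x.2.2 : ℕ)
      then b ⟨x.1, x.2.1, ⟨(x.2.2 : ℕ) - m, Nat.lt_of_le_of_lt (Nat.sub_le _ _) x.2.2.isLt⟩⟩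
      else 0 := by
  induction m generalizing x with
  | zero => simp
  | succ m ih =>
    rw [pow_succ, Module.End.mul_apply, hFt]
    by_cases hx : 0 < (x.2.2 : ℕ)
    · rw [if_pos hx, ih]
      by_cases hm : m ≤ (x.2.2 : ℕ) - 1
      · rw [if_pos hm, if_pos (by omega)]
        simp only [Nat.sub_sub, Nat.add_comm 1 m]
      · rw [if_neg hm, if_neg (by omega)]
    · rw [if_neg hx, map_zero, if_neg (by omega)]

theorem proj_mul_shift_composite_eq_proj {P : ℕ} (hP : 3 ≤ P)
    {F Ft Pplus W1 PVpp PVpd : Module.End R V} (hF : IsLeftShift b F) (hFt : IsRightShift b Ft)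
    (hPplus : ∀ x : PyramidBox p r, Pplus (b x) = if (x.2.2 : ℕ) = 0 then b x else 0)
    (hW1 : ∀ x : PyramidBox p r,
      W1 (b x) = if ((x.2.2 : ℕ) + 1 = p x.1 ∧ p x.1 + 1 = P) then b x else 0)
    (hPVpp : ∀ x : PyramidBox p r,
      PVpp (b x) = if (x.2.2 : ℕ) = min (p x.1 - 1) (P - 3) then b x else 0)
    (hPVpd : ∀ x : PyramidBox p r, PVpd (b x) = if (x.2.2 : ℕ) = P - 2 then b x else 0) :
    W1 * F ^ (P - 2) * Pplus * Ft ^ (P - 3) * PVpp * Ft * PVpd = W1 := by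
  refine b.ext fun x => ?_
  simp only [Module.End.mul_apply]
  by_cases hx : (x.2.2 : ℕ) = P - 2
  · have hlt := x.2.2.isLt
    rw [hPVpd, if_pos hx, hFt, if_pos (by omega),
      hPVpp, if_pos (show (x.2.2 : ℕ) - 1 = min (p x.1 - 1) (P - 3) by omega),
      hFt.pow_apply, if_pos (show P - 3 ≤ (x.2.2 : ℕ) - 1 by omega),
      hPplus, if_pos (show (x.2.2 : ℕ) - 1 - (P - 3) = 0 by omega),
      hF.pow_apply, dif_pos (show (x.2.2 : ℕ) - 1 - (P - 3) + (P - 2) < p x.1 by omega)]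
    simp only [show (x.2.2 : ℕ) - 1 - (P - 3) + (P - 2) = x.2.2 by omega, Fin.eta]
  · rw [hPVpd, if_neg hx, hW1, if_neg (by omega)]
    simp only [map_zero]

end PyramidBox

open PyramidBox in
/-- In the paper's notation `Ft = Fᵗ`, `Pplus = 1_{V₊}`, `W1 = 1_{V₋ᵘ ∩ V′₋ᵈ}`,
`PVpp = 1_{V″₋}`, `PVpd = 1_{V′₋ᵈ}`; on `V′₋ᵈ` the shift `(F′)ᵗ` agrees with `Fᵗ`. -/
theorem stmt17_general {K : Type*} [Field K]
    {V : Type*} [AddCommGroup V] [Module K V]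
    {s : ℕ} (hs : 0 < s) (p r : Fin s → ℕ)
    (h3 : 3 ≤ p ⟨0, hs⟩)
    (b : Module.Basis (PyramidBox p r) K V)
    (F Ft Pplus W1 PVpp PVpd : Module.End K V)
    (hF : ∀ x : PyramidBox p r,
      F (b x) = if h : (x.2.2 : ℕ) + 1 < p x.1
        then b ⟨x.1, x.2.1, ⟨(x.2.2 : ℕ) + 1, h⟩⟩ else 0)
    (hFt : ∀ x : PyramidBox p r,
      Ft (b x) = if 0 < (x.2.2 : ℕ)
        then b ⟨x.1, x.2.1, ⟨(x.2.2 : ℕ) - 1, Nat.lt_of_le_of_lt (Nat.sub_le _ _) x.2.2.isLt⟩⟩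
        else 0)
    (hPplus : ∀ x : PyramidBox p r, Pplus (b x) = if (x.2.2 : ℕ) = 0 then b x else 0)
    (hW1 : ∀ x : PyramidBox p r,
      W1 (b x) = if ((x.2.2 : ℕ) + 1 = p x.1 ∧ p x.1 + 1 = p ⟨0, hs⟩) then b x else 0)
    (hPVpp : ∀ x : PyramidBox p r,
      PVpp (b x) = if (x.2.2 : ℕ) = min (p x.1 - 1) (p ⟨0, hs⟩ - 3) then b x else 0)
    (hPVpd : ∀ x : PyramidBox p r,
      PVpd (b x) = if (x.2.2 : ℕ) = p ⟨0, hs⟩ - 2 then b x else 0) :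
    ((-1 : K) ^ (p ⟨0, hs⟩)) •
      (Polynomial.C W1 * Polynomial.C (F ^ (p ⟨0, hs⟩ - 2)) * Polynomial.C Pplus *
        (∑ m ∈ Finset.range (p ⟨0, hs⟩),
          ((-1 : K) ^ m) • (Polynomial.C (Ft ^ m) * Polynomial.X ^ m)) *
        Polynomial.C PVpp * Polynomial.C Ft * Polynomial.C PVpd).coeff (p ⟨0, hs⟩ - 3)
      = -W1 := by
  set P := p ⟨0, hs⟩
  open Polynomial in
  calc _ = ((-1 : K) ^ P * (-1) ^ (P - 3)) •
        (W1 * F ^ (P - 2) * Pplus * Ft ^ (P - 3) * PVpp * Ft * PVpd) := by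
        set S := ∑ m ∈ Finset.range P, ((-1 : K) ^ m) • (C (Ft ^ m) * X ^ m)
        rw [show C W1 * C (F ^ (P - 2)) * C Pplus * S * C PVpp * C Ft * C PVpd =
              C (W1 * F ^ (P - 2) * Pplus) * S * C (PVpp * Ft * PVpd) by
            simp only [map_mul, mul_assoc],
          coeff_C_mul_sum_neg_one_pow_smul_mul_C _ _ _ (by omega : P - 3 < P), smul_smul]
        simp only [mul_assoc]
    _ = -W1 := by
      rw [← pow_add, Odd.neg_one_pow ⟨P - 2, by omega⟩, neg_one_smul,
        proj_mul_shift_composite_eq_proj h3 hF hFt hPplus hW1 hPVpp hPVpd]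

/-- the residue computation for the pyramid.  With `F` the left shift of the
(right-aligned) pyramid, `Ft = Fᵗ` the right shift, `Pplus = 1_{V₊}` (rightmost boxes),
`W1 = 1_{V₋ᵘ ∩ V′₋ᵈ}` (leftmost boxes of rows of length exactly `p₁ - 1`),
`PVpp = 1_{V″₋}` (leftmost boxes after removing the two leftmost columns) and
`PVpd = 1_{V′₋ᵈ}` (boxes of the second-leftmost column, position `p₁ - 2`), one has
`(−1)^{p₁} Res_x x^{−p₁+2} · 1_{V₋ᵘ ∩ V′₋ᵈ} F^{p₁−2} 1_{V₊} (1 + x Fᵗ)^{−1} 1_{V″₋} (F′)ᵗ 1_{V′₋ᵈ}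
  = −1_{V₋ᵘ ∩ V′₋ᵈ}`,
where `(1 + x Fᵗ)^{-1} = ∑_m (−x)^m (Fᵗ)^m` (a finite geometric series), the residue is the
coefficient of `x^{p₁−3}` of the resulting polynomial with coefficients in `End V`, and
`(F′)ᵗ` agrees with `Fᵗ` on `V′`. -/
theorem stmt17 {K : Type*} [Field K] [CharZero K]
    {V : Type*} [AddCommGroup V] [Module K V]
    {s : ℕ} (hs : 0 < s) (p r : Fin s → ℕ) (hp : StrictAnti p) (hp0 : ∀ i, 0 < p i)
    (h3 : 3 ≤ p ⟨0, hs⟩)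
    (b : Module.Basis (PyramidBox p r) K V)
    (F Ft Pplus W1 PVpp PVpd : Module.End K V)
    (hF : ∀ x : PyramidBox p r,
      F (b x) = if h : (x.2.2 : ℕ) + 1 < p x.1
        then b ⟨x.1, x.2.1, ⟨(x.2.2 : ℕ) + 1, h⟩⟩ else 0)
    (hFt : ∀ x : PyramidBox p r,
      Ft (b x) = if 0 < (x.2.2 : ℕ)
        then b ⟨x.1, x.2.1, ⟨(x.2.2 : ℕ) - 1, Nat.lt_of_le_of_lt (Nat.sub_le _ _) x.2.2.isLt⟩⟩
        else 0)
    (hPplus : ∀ x : PyramidBox p r, Pplus (b x) = if (x.2.2 : ℕ) = 0 then b x else 0)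
    (hW1 : ∀ x : PyramidBox p r,
      W1 (b x) = if ((x.2.2 : ℕ) + 1 = p x.1 ∧ p x.1 + 1 = p ⟨0, hs⟩) then b x else 0)
    (hPVpp : ∀ x : PyramidBox p r,
      PVpp (b x) = if (x.2.2 : ℕ) = min (p x.1 - 1) (p ⟨0, hs⟩ - 3) then b x else 0)
    (hPVpd : ∀ x : PyramidBox p r,
      PVpd (b x) = if (x.2.2 : ℕ) = p ⟨0, hs⟩ - 2 then b x else 0) :
    ((-1 : K) ^ (p ⟨0, hs⟩)) •
      (Polynomial.C W1 * Polynomial.C (F ^ (p ⟨0, hs⟩ - 2)) * Polynomial.C Pplus *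
        (∑ m ∈ Finset.range (p ⟨0, hs⟩),
          ((-1 : K) ^ m) • (Polynomial.C (Ft ^ m) * Polynomial.X ^ m)) *
        Polynomial.C PVpp * Polynomial.C Ft * Polynomial.C PVpd).coeff (p ⟨0, hs⟩ - 3)
      = -W1 :=
  stmt17_general hs p r h3 b F Ft Pplus W1 PVpp PVpd hF hFt hPplus hW1 hPVpp hPVpd
end
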